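/- Let ∗φ be the Hodge dual of the standard G₂ 3-form on R⁷ and let ξ ∈ (R⁷)* be nonzero. Then the linear map Λ³(R⁷)* → Λ⁶(R⁷)*, α ↦ (ι_{ξ♯} ∗φ) ∧ α, is surjective. -/
import Mathlib


open ExteriorAlgebra

noncomputable section

abbrev W7 := Fin 7 → ℝ
abbrev E7 := ExteriorAlgebra ℝ W7

/-- The standard basis covectors `e^i` (indices `0,…,6` correspond to `1,…,7`). -/
def e7 (i : Fin 7) : E7 := ExteriorAlgebra.ι ℝ (Pi.single i 1)

/-- The wedge monomial `e^{i₁…i_k}` for `{i₁ < ⋯ < i_k} = s`. -/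
def mono7 (s : Finset (Fin 7)) : E7 := ((s.sort (· ≤ ·)).map e7).prod

/-- The standard volume form `e^{1…7}`. -/
def vol7 : E7 := mono7 Finset.univ

/-- The space of `k`-forms. -/
def gr7 (k : ℕ) : Submodule ℝ E7 := ⋀[ℝ]^k W7

/-- The covector `u♭ = g(u,·)` of a vector `u ∈ ℝ⁷` (standard metric). -/
def flat7 (u : W7) : Module.Dual ℝ W7 := ∑ i, u i • (LinearMap.proj i)

/-- Interior multiplication `ι_u` with the vector `u`. -/
def ctr7 (u : W7) : E7 →ₗ[ℝ] E7 := CliffordAlgebra.contractLeft (flat7 u)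

/-- The standard G₂ 3-form `φ = e^{123}+e^{145}+e^{167}+e^{246}−e^{257}−e^{347}−e^{356}`. -/
def phi7 : E7 :=
  e7 0 * e7 1 * e7 2 + e7 0 * e7 3 * e7 4 + e7 0 * e7 5 * e7 6 + e7 1 * e7 3 * e7 5
    - e7 1 * e7 4 * e7 6 - e7 2 * e7 3 * e7 6 - e7 2 * e7 4 * e7 5

/-- `∗φ = e^{4567}+e^{2367}+e^{2345}+e^{1357}−e^{1346}−e^{1256}−e^{1247}`. -/
def psi7 : E7 :=
  e7 3 * e7 4 * e7 5 * e7 6 + e7 1 * e7 2 * e7 5 * e7 6 + e7 1 * e7 2 * e7 3 * e7 4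
    + e7 0 * e7 2 * e7 4 * e7 6 - e7 0 * e7 2 * e7 3 * e7 5 - e7 0 * e7 1 * e7 4 * e7 5
    - e7 0 * e7 1 * e7 3 * e7 6

lemma e7_anticomm (u v : W7) : ι ℝ v * ι ℝ u = -(ι ℝ u * ι ℝ v) := by
  have h := ι_sq_zero (R := ℝ) (u + v)
  rw [map_add, add_mul, mul_add, mul_add, ι_sq_zero, ι_sq_zero, zero_add, add_zero] at h
  exact eq_neg_of_add_eq_zero_left (by linear_combination (norm := noncomm_ring) h)

lemma e7_swap (i j : Fin 7) : e7 j * e7 i = -(e7 i * e7 j) := e7_anticomm _ _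
lemma e7_sq (i : Fin 7) : e7 i * e7 i = 0 := ι_sq_zero _
lemma e7_sq' (i : Fin 7) (x : E7) : e7 i * (e7 i * x) = 0 := by
  rw [← mul_assoc, e7_sq, zero_mul]
lemma e7_swap' (i j : Fin 7) (x : E7) : e7 j * (e7 i * x) = -(e7 i * (e7 j * x)) := by
  rw [← mul_assoc, e7_swap, neg_mul, mul_assoc]

@[simp] lemma e7q_0 (x : E7) : e7 0 * (e7 0 * x) = 0 := e7_sq' 0 x
@[simp] lemma e7qq_0 : e7 0 * e7 0 = 0 := e7_sq 0
@[simp] lemma e7q_1 (x : E7) : e7 1 * (e7 1 * x) = 0 := e7_sq' 1 x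
@[simp] lemma e7qq_1 : e7 1 * e7 1 = 0 := e7_sq 1
@[simp] lemma e7q_2 (x : E7) : e7 2 * (e7 2 * x) = 0 := e7_sq' 2 x
@[simp] lemma e7qq_2 : e7 2 * e7 2 = 0 := e7_sq 2
@[simp] lemma e7q_3 (x : E7) : e7 3 * (e7 3 * x) = 0 := e7_sq' 3 x
@[simp] lemma e7qq_3 : e7 3 * e7 3 = 0 := e7_sq 3
@[simp] lemma e7q_4 (x : E7) : e7 4 * (e7 4 * x) = 0 := e7_sq' 4 x
@[simp] lemma e7qq_4 : e7 4 * e7 4 = 0 := e7_sq 4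
@[simp] lemma e7q_5 (x : E7) : e7 5 * (e7 5 * x) = 0 := e7_sq' 5 x
@[simp] lemma e7qq_5 : e7 5 * e7 5 = 0 := e7_sq 5
@[simp] lemma e7q_6 (x : E7) : e7 6 * (e7 6 * x) = 0 := e7_sq' 6 x
@[simp] lemma e7qq_6 : e7 6 * e7 6 = 0 := e7_sq 6
lemma e7w_1_0 (x : E7) : e7 1 * (e7 0 * x) = -(e7 0 * (e7 1 * x)) := e7_swap' 0 1 x
lemma e7ww_1_0 : e7 1 * e7 0 = -(e7 0 * e7 1) := e7_swap 0 1
lemma e7w_2_0 (x : E7) : e7 2 * (e7 0 * x) = -(e7 0 * (e7 2 * x)) := e7_swap' 0 2 x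
lemma e7ww_2_0 : e7 2 * e7 0 = -(e7 0 * e7 2) := e7_swap 0 2
lemma e7w_3_0 (x : E7) : e7 3 * (e7 0 * x) = -(e7 0 * (e7 3 * x)) := e7_swap' 0 3 x
lemma e7ww_3_0 : e7 3 * e7 0 = -(e7 0 * e7 3) := e7_swap 0 3
lemma e7w_4_0 (x : E7) : e7 4 * (e7 0 * x) = -(e7 0 * (e7 4 * x)) := e7_swap' 0 4 x
lemma e7ww_4_0 : e7 4 * e7 0 = -(e7 0 * e7 4) := e7_swap 0 4
lemma e7w_5_0 (x : E7) : e7 5 * (e7 0 * x) = -(e7 0 * (e7 5 * x)) := e7_swap' 0 5 x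
lemma e7ww_5_0 : e7 5 * e7 0 = -(e7 0 * e7 5) := e7_swap 0 5
lemma e7w_6_0 (x : E7) : e7 6 * (e7 0 * x) = -(e7 0 * (e7 6 * x)) := e7_swap' 0 6 x
lemma e7ww_6_0 : e7 6 * e7 0 = -(e7 0 * e7 6) := e7_swap 0 6
lemma e7w_2_1 (x : E7) : e7 2 * (e7 1 * x) = -(e7 1 * (e7 2 * x)) := e7_swap' 1 2 x
lemma e7ww_2_1 : e7 2 * e7 1 = -(e7 1 * e7 2) := e7_swap 1 2
lemma e7w_3_1 (x : E7) : e7 3 * (e7 1 * x) = -(e7 1 * (e7 3 * x)) := e7_swap' 1 3 x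
lemma e7ww_3_1 : e7 3 * e7 1 = -(e7 1 * e7 3) := e7_swap 1 3
lemma e7w_4_1 (x : E7) : e7 4 * (e7 1 * x) = -(e7 1 * (e7 4 * x)) := e7_swap' 1 4 x
lemma e7ww_4_1 : e7 4 * e7 1 = -(e7 1 * e7 4) := e7_swap 1 4
lemma e7w_5_1 (x : E7) : e7 5 * (e7 1 * x) = -(e7 1 * (e7 5 * x)) := e7_swap' 1 5 x
lemma e7ww_5_1 : e7 5 * e7 1 = -(e7 1 * e7 5) := e7_swap 1 5
lemma e7w_6_1 (x : E7) : e7 6 * (e7 1 * x) = -(e7 1 * (e7 6 * x)) := e7_swap' 1 6 x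
lemma e7ww_6_1 : e7 6 * e7 1 = -(e7 1 * e7 6) := e7_swap 1 6
lemma e7w_3_2 (x : E7) : e7 3 * (e7 2 * x) = -(e7 2 * (e7 3 * x)) := e7_swap' 2 3 x
lemma e7ww_3_2 : e7 3 * e7 2 = -(e7 2 * e7 3) := e7_swap 2 3
lemma e7w_4_2 (x : E7) : e7 4 * (e7 2 * x) = -(e7 2 * (e7 4 * x)) := e7_swap' 2 4 x
lemma e7ww_4_2 : e7 4 * e7 2 = -(e7 2 * e7 4) := e7_swap 2 4
lemma e7w_5_2 (x : E7) : e7 5 * (e7 2 * x) = -(e7 2 * (e7 5 * x)) := e7_swap' 2 5 x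
lemma e7ww_5_2 : e7 5 * e7 2 = -(e7 2 * e7 5) := e7_swap 2 5
lemma e7w_6_2 (x : E7) : e7 6 * (e7 2 * x) = -(e7 2 * (e7 6 * x)) := e7_swap' 2 6 x
lemma e7ww_6_2 : e7 6 * e7 2 = -(e7 2 * e7 6) := e7_swap 2 6
lemma e7w_4_3 (x : E7) : e7 4 * (e7 3 * x) = -(e7 3 * (e7 4 * x)) := e7_swap' 3 4 x
lemma e7ww_4_3 : e7 4 * e7 3 = -(e7 3 * e7 4) := e7_swap 3 4
lemma e7w_5_3 (x : E7) : e7 5 * (e7 3 * x) = -(e7 3 * (e7 5 * x)) := e7_swap' 3 5 x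
lemma e7ww_5_3 : e7 5 * e7 3 = -(e7 3 * e7 5) := e7_swap 3 5
lemma e7w_6_3 (x : E7) : e7 6 * (e7 3 * x) = -(e7 3 * (e7 6 * x)) := e7_swap' 3 6 x
lemma e7ww_6_3 : e7 6 * e7 3 = -(e7 3 * e7 6) := e7_swap 3 6
lemma e7w_5_4 (x : E7) : e7 5 * (e7 4 * x) = -(e7 4 * (e7 5 * x)) := e7_swap' 4 5 x
lemma e7ww_5_4 : e7 5 * e7 4 = -(e7 4 * e7 5) := e7_swap 4 5
lemma e7w_6_4 (x : E7) : e7 6 * (e7 4 * x) = -(e7 4 * (e7 6 * x)) := e7_swap' 4 6 x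
lemma e7ww_6_4 : e7 6 * e7 4 = -(e7 4 * e7 6) := e7_swap 4 6
lemma e7w_6_5 (x : E7) : e7 6 * (e7 5 * x) = -(e7 5 * (e7 6 * x)) := e7_swap' 5 6 x
lemma e7ww_6_5 : e7 6 * e7 5 = -(e7 5 * e7 6) := e7_swap 5 6
lemma ctr_e7_mul (ξ : Module.Dual ℝ W7) (i : Fin 7) (b : E7) :
    CliffordAlgebra.contractLeft ξ (e7 i * b)
      = ξ (Pi.single i 1) • b - e7 i * (CliffordAlgebra.contractLeft ξ b) :=
  CliffordAlgebra.contractLeft_ι_mul _ _ _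
lemma ctr_e7 (ξ : Module.Dual ℝ W7) (i : Fin 7) :
    CliffordAlgebra.contractLeft ξ (e7 i) = algebraMap ℝ E7 (ξ (Pi.single i 1)) :=
  CliffordAlgebra.contractLeft_ι (0 : QuadraticForm ℝ W7) (d := ξ) (Pi.single i 1)

lemma e7_mem (i : Fin 7) : e7 i ∈ LinearMap.range (ι ℝ : W7 →ₗ[ℝ] E7) := ⟨_, rfl⟩

lemma mem3 (a b c : Fin 7) : e7 a * e7 b * e7 c ∈ gr7 3 := by
  show _ ∈ (LinearMap.range (ι ℝ : W7 →ₗ[ℝ] E7)) ^ (3:ℕ)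
  rw [show (3:ℕ) = 2+1 from rfl, pow_succ, show (2:ℕ) = 1+1 from rfl, pow_succ, pow_one]
  exact Submodule.mul_mem_mul (Submodule.mul_mem_mul (e7_mem a) (e7_mem b)) (e7_mem c)

lemma mem6 (a b c d e f : Fin 7) : e7 a * e7 b * e7 c * e7 d * e7 e * e7 f ∈ gr7 6 := by
  show _ ∈ (LinearMap.range (ι ℝ : W7 →ₗ[ℝ] E7)) ^ (6:ℕ)
  rw [show (6:ℕ) = 5+1 from rfl, pow_succ, show (5:ℕ) = 4+1 from rfl, pow_succ,
    show (4:ℕ) = 3+1 from rfl, pow_succ, show (3:ℕ) = 2+1 from rfl, pow_succ,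
    show (2:ℕ) = 1+1 from rfl, pow_succ, pow_one]
  exact Submodule.mul_mem_mul (Submodule.mul_mem_mul (Submodule.mul_mem_mul
    (Submodule.mul_mem_mul (Submodule.mul_mem_mul (e7_mem a) (e7_mem b)) (e7_mem c))
    (e7_mem d)) (e7_mem e)) (e7_mem f)

lemma phi7_mem : phi7 ∈ gr7 3 := by
  rw [phi7]
  exact sub_mem (sub_mem (sub_mem (add_mem (add_mem (add_mem (mem3 _ _ _) (mem3 _ _ _))
    (mem3 _ _ _)) (mem3 _ _ _)) (mem3 _ _ _)) (mem3 _ _ _)) (mem3 _ _ _)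

def sg : Fin 7 → E7 := ![e7 1 * e7 2 * e7 3 * e7 4 * e7 5 * e7 6, -(e7 0 * e7 2 * e7 3 * e7 4 * e7 5 * e7 6), e7 0 * e7 1 * e7 3 * e7 4 * e7 5 * e7 6, -(e7 0 * e7 1 * e7 2 * e7 4 * e7 5 * e7 6), e7 0 * e7 1 * e7 2 * e7 3 * e7 5 * e7 6, -(e7 0 * e7 1 * e7 2 * e7 3 * e7 4 * e7 6), e7 0 * e7 1 * e7 2 * e7 3 * e7 4 * e7 5]
lemma sg_0 : sg 0 = e7 1 * e7 2 * e7 3 * e7 4 * e7 5 * e7 6 := rfl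
lemma sg_1 : sg 1 = -(e7 0 * e7 2 * e7 3 * e7 4 * e7 5 * e7 6) := rfl
lemma sg_2 : sg 2 = e7 0 * e7 1 * e7 3 * e7 4 * e7 5 * e7 6 := rfl
lemma sg_3 : sg 3 = -(e7 0 * e7 1 * e7 2 * e7 4 * e7 5 * e7 6) := rfl
lemma sg_4 : sg 4 = e7 0 * e7 1 * e7 2 * e7 3 * e7 5 * e7 6 := rfl
lemma sg_5 : sg 5 = -(e7 0 * e7 1 * e7 2 * e7 3 * e7 4 * e7 6) := rfl
lemma sg_6 : sg 6 = e7 0 * e7 1 * e7 2 * e7 3 * e7 4 * e7 5 := rfl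
lemma sg_mem (k : Fin 7) : sg k ∈ gr7 6 := by
  fin_cases k <;> simp only [sg_0, sg_1, sg_2, sg_3, sg_4, sg_5, sg_6] <;> first | exact mem6 _ _ _ _ _ _ | exact neg_mem (mem6 _ _ _ _ _ _)
def P7 : Fin 7 → E7 := ![(-(e7 1 * e7 3 * e7 6) - e7 1 * e7 4 * e7 5 - e7 2 * e7 3 * e7 5 + e7 2 * e7 4 * e7 6), (e7 0 * e7 3 * e7 6 + e7 0 * e7 4 * e7 5 + e7 2 * e7 3 * e7 4 + e7 2 * e7 5 * e7 6), (e7 0 * e7 3 * e7 5 - e7 0 * e7 4 * e7 6 - e7 1 * e7 3 * e7 4 - e7 1 * e7 5 * e7 6), (-(e7 0 * e7 1 * e7 6) - e7 0 * e7 2 * e7 5 + e7 1 * e7 2 * e7 4 + e7 4 * e7 5 * e7 6), (-(e7 0 * e7 1 * e7 5) + e7 0 * e7 2 * e7 6 - e7 1 * e7 2 * e7 3 - e7 3 * e7 5 * e7 6), (e7 0 * e7 1 * e7 4 + e7 0 * e7 2 * e7 3 + e7 1 * e7 2 * e7 6 + e7 3 * e7 4 * e7 6), (e7 0 * e7 1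 * e7 3 - e7 0 * e7 2 * e7 4 - e7 1 * e7 2 * e7 5 - e7 3 * e7 4 * e7 5)]
lemma P7_0 : P7 0 = -(e7 1 * e7 3 * e7 6) - e7 1 * e7 4 * e7 5 - e7 2 * e7 3 * e7 5 + e7 2 * e7 4 * e7 6 := rfl
lemma P7_1 : P7 1 = e7 0 * e7 3 * e7 6 + e7 0 * e7 4 * e7 5 + e7 2 * e7 3 * e7 4 + e7 2 * e7 5 * e7 6 := rfl
lemma P7_2 : P7 2 = e7 0 * e7 3 * e7 5 - e7 0 * e7 4 * e7 6 - e7 1 * e7 3 * e7 4 - e7 1 * e7 5 * e7 6 := rfl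
lemma P7_3 : P7 3 = -(e7 0 * e7 1 * e7 6) - e7 0 * e7 2 * e7 5 + e7 1 * e7 2 * e7 4 + e7 4 * e7 5 * e7 6 := rfl
lemma P7_4 : P7 4 = -(e7 0 * e7 1 * e7 5) + e7 0 * e7 2 * e7 6 - e7 1 * e7 2 * e7 3 - e7 3 * e7 5 * e7 6 := rfl
lemma P7_5 : P7 5 = e7 0 * e7 1 * e7 4 + e7 0 * e7 2 * e7 3 + e7 1 * e7 2 * e7 6 + e7 3 * e7 4 * e7 6 := rfl
lemma P7_6 : P7 6 = e7 0 * e7 1 * e7 3 - e7 0 * e7 2 * e7 4 - e7 1 * e7 2 * e7 5 - e7 3 * e7 4 * e7 5 := rfl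
lemma P7_mem (j : Fin 7) : P7 j ∈ gr7 3 := by
  fin_cases j
  · rw [show P7 ⟨0, by norm_num⟩ = P7 0 from rfl, P7_0]; exact (add_mem (sub_mem (sub_mem (neg_mem (mem3 _ _ _)) (mem3 _ _ _)) (mem3 _ _ _)) (mem3 _ _ _))
  · rw [show P7 ⟨1, by norm_num⟩ = P7 1 from rfl, P7_1]; exact (add_mem (add_mem (add_mem (mem3 _ _ _) (mem3 _ _ _)) (mem3 _ _ _)) (mem3 _ _ _))
  · rw [show P7 ⟨2, by norm_num⟩ = P7 2 from rfl, P7_2]; exact (sub_mem (sub_mem (sub_mem (mem3 _ _ _) (mem3 _ _ _)) (mem3 _ _ _)) (mem3 _ _ _))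
  · rw [show P7 ⟨3, by norm_num⟩ = P7 3 from rfl, P7_3]; exact (add_mem (add_mem (sub_mem (neg_mem (mem3 _ _ _)) (mem3 _ _ _)) (mem3 _ _ _)) (mem3 _ _ _))
  · rw [show P7 ⟨4, by norm_num⟩ = P7 4 from rfl, P7_4]; exact (sub_mem (sub_mem (add_mem (neg_mem (mem3 _ _ _)) (mem3 _ _ _)) (mem3 _ _ _)) (mem3 _ _ _))
  · rw [show P7 ⟨5, by norm_num⟩ = P7 5 from rfl, P7_5]; exact (add_mem (add_mem (add_mem (mem3 _ _ _) (mem3 _ _ _)) (mem3 _ _ _)) (mem3 _ _ _))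
  · rw [show P7 ⟨6, by norm_num⟩ = P7 6 from rfl, P7_6]; exact (sub_mem (sub_mem (sub_mem (mem3 _ _ _) (mem3 _ _ _)) (mem3 _ _ _)) (mem3 _ _ _))
def X7 (c : W7) : Fin 7 → W7 := ![![0, c 2, -c 1, c 4, -c 3, c 6, -c 5], ![-c 2, 0, c 0, c 5, -c 6, -c 3, c 4], ![c 1, -c 0, 0, -c 6, -c 5, c 4, c 3], ![-c 4, -c 5, c 6, 0, c 0, c 1, -c 2], ![c 3, c 6, c 5, -c 0, 0, -c 2, -c 1], ![-c 6, c 3, -c 4, -c 1, c 2, 0, c 0], ![c 5, -c 4, -c 3, c 2, c 1, -c 0, 0]]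
lemma X7_0_0 (c : W7) : X7 c 0 0 = 0 := rfl
lemma X7_0_1 (c : W7) : X7 c 0 1 = c 2 := rfl
lemma X7_0_2 (c : W7) : X7 c 0 2 = -c 1 := rfl
lemma X7_0_3 (c : W7) : X7 c 0 3 = c 4 := rfl
lemma X7_0_4 (c : W7) : X7 c 0 4 = -c 3 := rfl
lemma X7_0_5 (c : W7) : X7 c 0 5 = c 6 := rfl
lemma X7_0_6 (c : W7) : X7 c 0 6 = -c 5 := rfl
lemma X7_1_0 (c : W7) : X7 c 1 0 = -c 2 := rfl
lemma X7_1_1 (c : W7) : X7 c 1 1 = 0 := rfl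
lemma X7_1_2 (c : W7) : X7 c 1 2 = c 0 := rfl
lemma X7_1_3 (c : W7) : X7 c 1 3 = c 5 := rfl
lemma X7_1_4 (c : W7) : X7 c 1 4 = -c 6 := rfl
lemma X7_1_5 (c : W7) : X7 c 1 5 = -c 3 := rfl
lemma X7_1_6 (c : W7) : X7 c 1 6 = c 4 := rfl
lemma X7_2_0 (c : W7) : X7 c 2 0 = c 1 := rfl
lemma X7_2_1 (c : W7) : X7 c 2 1 = -c 0 := rfl
lemma X7_2_2 (c : W7) : X7 c 2 2 = 0 := rfl
lemma X7_2_3 (c : W7) : X7 c 2 3 = -c 6 := rfl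
lemma X7_2_4 (c : W7) : X7 c 2 4 = -c 5 := rfl
lemma X7_2_5 (c : W7) : X7 c 2 5 = c 4 := rfl
lemma X7_2_6 (c : W7) : X7 c 2 6 = c 3 := rfl
lemma X7_3_0 (c : W7) : X7 c 3 0 = -c 4 := rfl
lemma X7_3_1 (c : W7) : X7 c 3 1 = -c 5 := rfl
lemma X7_3_2 (c : W7) : X7 c 3 2 = c 6 := rfl
lemma X7_3_3 (c : W7) : X7 c 3 3 = 0 := rfl
lemma X7_3_4 (c : W7) : X7 c 3 4 = c 0 := rfl
lemma X7_3_5 (c : W7) : X7 c 3 5 = c 1 := rfl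
lemma X7_3_6 (c : W7) : X7 c 3 6 = -c 2 := rfl
lemma X7_4_0 (c : W7) : X7 c 4 0 = c 3 := rfl
lemma X7_4_1 (c : W7) : X7 c 4 1 = c 6 := rfl
lemma X7_4_2 (c : W7) : X7 c 4 2 = c 5 := rfl
lemma X7_4_3 (c : W7) : X7 c 4 3 = -c 0 := rfl
lemma X7_4_4 (c : W7) : X7 c 4 4 = 0 := rfl
lemma X7_4_5 (c : W7) : X7 c 4 5 = -c 2 := rfl
lemma X7_4_6 (c : W7) : X7 c 4 6 = -c 1 := rfl
lemma X7_5_0 (c : W7) : X7 c 5 0 = -c 6 := rfl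
lemma X7_5_1 (c : W7) : X7 c 5 1 = c 3 := rfl
lemma X7_5_2 (c : W7) : X7 c 5 2 = -c 4 := rfl
lemma X7_5_3 (c : W7) : X7 c 5 3 = -c 1 := rfl
lemma X7_5_4 (c : W7) : X7 c 5 4 = c 2 := rfl
lemma X7_5_5 (c : W7) : X7 c 5 5 = 0 := rfl
lemma X7_5_6 (c : W7) : X7 c 5 6 = c 0 := rfl
lemma X7_6_0 (c : W7) : X7 c 6 0 = c 5 := rfl
lemma X7_6_1 (c : W7) : X7 c 6 1 = -c 4 := rfl
lemma X7_6_2 (c : W7) : X7 c 6 2 = -c 3 := rfl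
lemma X7_6_3 (c : W7) : X7 c 6 3 = c 2 := rfl
lemma X7_6_4 (c : W7) : X7 c 6 4 = c 1 := rfl
lemma X7_6_5 (c : W7) : X7 c 6 5 = -c 0 := rfl
lemma X7_6_6 (c : W7) : X7 c 6 6 = 0 := rfl
def sigL : W7 →ₗ[ℝ] E7 := ∑ i : Fin 7, (LinearMap.proj i : W7 →ₗ[ℝ] ℝ).smulRight (sg i)

lemma sigL_apply (w : W7) : sigL w = ∑ i : Fin 7, w i • sg i := by
  simp [sigL, LinearMap.sum_apply, LinearMap.smulRight_apply]

lemma sigL_single (k : Fin 7) : sigL (Pi.single k 1) = sg k := by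
  rw [sigL_apply]
  rw [Finset.sum_eq_single k]
  · simp
  · intro b _ hb
    rw [Pi.single_eq_of_ne hb, zero_smul]
  · simp


set_option maxHeartbeats 1000000 in
lemma L1 (ξ : Module.Dual ℝ W7) :
    CliffordAlgebra.contractLeft ξ psi7 * phi7 = (4:ℝ) • sigL (fun i => ξ (Pi.single i 1)) := by
  rw [sigL_apply]
  simp only [psi7, phi7, map_add, map_sub, mul_assoc, ctr_e7_mul, ctr_e7,
    Algebra.algebraMap_eq_smul_one, Fin.sum_univ_seven,
    sg_0, sg_1, sg_2, sg_3, sg_4, sg_5, sg_6, P7_0, P7_1, P7_2, P7_3, P7_4, P7_5, P7_6,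
    X7_0_0, X7_0_1, X7_0_2, X7_0_3, X7_0_4, X7_0_5, X7_0_6, X7_1_0, X7_1_1, X7_1_2, X7_1_3, X7_1_4, X7_1_5, X7_1_6, X7_2_0, X7_2_1, X7_2_2, X7_2_3, X7_2_4, X7_2_5, X7_2_6, X7_3_0, X7_3_1, X7_3_2, X7_3_3, X7_3_4, X7_3_5, X7_3_6, X7_4_0, X7_4_1, X7_4_2, X7_4_3, X7_4_4, X7_4_5, X7_4_6, X7_5_0, X7_5_1, X7_5_2, X7_5_3, X7_5_4, X7_5_5, X7_5_6, X7_6_0, X7_6_1, X7_6_2, X7_6_3, X7_6_4, X7_6_5, X7_6_6,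
    smul_mul_assoc, mul_smul_comm, one_mul, mul_one, sub_mul, add_mul, mul_add, mul_sub,
    neg_mul, mul_neg, smul_smul, smul_zero, mul_zero, zero_mul, zero_smul, smul_neg, neg_neg,
    e7q_0, e7q_1, e7q_2, e7q_3, e7q_4, e7q_5, e7q_6, e7qq_0, e7qq_1, e7qq_2, e7qq_3, e7qq_4, e7qq_5, e7qq_6]
  simp only [e7w_1_0, e7ww_1_0, e7w_2_0, e7ww_2_0, e7w_3_0, e7ww_3_0, e7w_4_0, e7ww_4_0, e7w_5_0, e7ww_5_0, e7w_6_0, e7ww_6_0, e7w_2_1, e7ww_2_1, e7w_3_1, e7ww_3_1, e7w_4_1, e7ww_4_1, e7w_5_1, e7ww_5_1, e7w_6_1, e7ww_6_1, e7w_3_2, e7ww_3_2, e7w_4_2, e7ww_4_2, e7w_5_2, e7ww_5_2, e7w_6_2, e7ww_6_2, e7w_4_3, e7ww_4_3, e7w_5_3, e7ww_5_3, e7w_6_3, e7ww_6_3, e7w_5_4, e7ww_5_4, e7w_6_4, e7ww_6_4, e7w_6_5, e7ww_6_5,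
     e7q_0,e7q_1,e7q_2,e7q_3,e7q_4,e7q_5,e7q_6,e7qq_0,e7qq_1,e7qq_2,e7qq_3,e7qq_4,e7qq_5,e7qq_6,
     mul_neg, neg_mul, mul_zero, zero_mul, smul_neg, smul_zero, neg_neg, mul_smul_comm, smul_mul_assoc]
  module


set_option maxHeartbeats 1000000 in
lemma L2_0 (ξ : Module.Dual ℝ W7) :
    CliffordAlgebra.contractLeft ξ psi7 * P7 0 = (2:ℝ) • sigL (X7 (fun i => ξ (Pi.single i 1)) 0) := by
  rw [sigL_apply]
  simp only [psi7, phi7, map_add, map_sub, mul_assoc, ctr_e7_mul, ctr_e7,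
    Algebra.algebraMap_eq_smul_one, Fin.sum_univ_seven,
    sg_0, sg_1, sg_2, sg_3, sg_4, sg_5, sg_6, P7_0, P7_1, P7_2, P7_3, P7_4, P7_5, P7_6,
    X7_0_0, X7_0_1, X7_0_2, X7_0_3, X7_0_4, X7_0_5, X7_0_6, X7_1_0, X7_1_1, X7_1_2, X7_1_3, X7_1_4, X7_1_5, X7_1_6, X7_2_0, X7_2_1, X7_2_2, X7_2_3, X7_2_4, X7_2_5, X7_2_6, X7_3_0, X7_3_1, X7_3_2, X7_3_3, X7_3_4, X7_3_5, X7_3_6, X7_4_0, X7_4_1, X7_4_2, X7_4_3, X7_4_4, X7_4_5, X7_4_6, X7_5_0, X7_5_1, X7_5_2, X7_5_3, X7_5_4, X7_5_5, X7_5_6, X7_6_0, X7_6_1, X7_6_2, X7_6_3, X7_6_4, X7_6_5, X7_6_6,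
    smul_mul_assoc, mul_smul_comm, one_mul, mul_one, sub_mul, add_mul, mul_add, mul_sub,
    neg_mul, mul_neg, smul_smul, smul_zero, mul_zero, zero_mul, zero_smul, smul_neg, neg_neg,
    e7q_0, e7q_1, e7q_2, e7q_3, e7q_4, e7q_5, e7q_6, e7qq_0, e7qq_1, e7qq_2, e7qq_3, e7qq_4, e7qq_5, e7qq_6]
  simp only [e7w_1_0, e7ww_1_0, e7w_2_0, e7ww_2_0, e7w_3_0, e7ww_3_0, e7w_4_0, e7ww_4_0, e7w_5_0, e7ww_5_0, e7w_6_0, e7ww_6_0, e7w_2_1, e7ww_2_1, e7w_3_1, e7ww_3_1, e7w_4_1, e7ww_4_1, e7w_5_1, e7ww_5_1, e7w_6_1, e7ww_6_1, e7w_3_2, e7ww_3_2, e7w_4_2, e7ww_4_2, e7w_5_2, e7ww_5_2, e7w_6_2, e7ww_6_2, e7w_4_3, e7ww_4_3, e7w_5_3, e7ww_5_3, e7w_6_3, e7ww_6_3, e7w_5_4, e7ww_5_4, e7w_6_4, e7ww_6_4, e7w_6_5, e7ww_6_5,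
     e7q_0,e7q_1,e7q_2,e7q_3,e7q_4,e7q_5,e7q_6,e7qq_0,e7qq_1,e7qq_2,e7qq_3,e7qq_4,e7qq_5,e7qq_6,
     mul_neg, neg_mul, mul_zero, zero_mul, smul_neg, smul_zero, neg_neg, mul_smul_comm, smul_mul_assoc]
  module


set_option maxHeartbeats 1000000 in
lemma L2_1 (ξ : Module.Dual ℝ W7) :
    CliffordAlgebra.contractLeft ξ psi7 * P7 1 = (2:ℝ) • sigL (X7 (fun i => ξ (Pi.single i 1)) 1) := by
  rw [sigL_apply]
  simp only [psi7, phi7, map_add, map_sub, mul_assoc, ctr_e7_mul, ctr_e7,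
    Algebra.algebraMap_eq_smul_one, Fin.sum_univ_seven,
    sg_0, sg_1, sg_2, sg_3, sg_4, sg_5, sg_6, P7_0, P7_1, P7_2, P7_3, P7_4, P7_5, P7_6,
    X7_0_0, X7_0_1, X7_0_2, X7_0_3, X7_0_4, X7_0_5, X7_0_6, X7_1_0, X7_1_1, X7_1_2, X7_1_3, X7_1_4, X7_1_5, X7_1_6, X7_2_0, X7_2_1, X7_2_2, X7_2_3, X7_2_4, X7_2_5, X7_2_6, X7_3_0, X7_3_1, X7_3_2, X7_3_3, X7_3_4, X7_3_5, X7_3_6, X7_4_0, X7_4_1, X7_4_2, X7_4_3, X7_4_4, X7_4_5, X7_4_6, X7_5_0, X7_5_1, X7_5_2, X7_5_3, X7_5_4, X7_5_5, X7_5_6, X7_6_0, X7_6_1, X7_6_2, X7_6_3, X7_6_4, X7_6_5, X7_6_6,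
    smul_mul_assoc, mul_smul_comm, one_mul, mul_one, sub_mul, add_mul, mul_add, mul_sub,
    neg_mul, mul_neg, smul_smul, smul_zero, mul_zero, zero_mul, zero_smul, smul_neg, neg_neg,
    e7q_0, e7q_1, e7q_2, e7q_3, e7q_4, e7q_5, e7q_6, e7qq_0, e7qq_1, e7qq_2, e7qq_3, e7qq_4, e7qq_5, e7qq_6]
  simp only [e7w_1_0, e7ww_1_0, e7w_2_0, e7ww_2_0, e7w_3_0, e7ww_3_0, e7w_4_0, e7ww_4_0, e7w_5_0, e7ww_5_0, e7w_6_0, e7ww_6_0, e7w_2_1, e7ww_2_1, e7w_3_1, e7ww_3_1, e7w_4_1, e7ww_4_1, e7w_5_1, e7ww_5_1, e7w_6_1, e7ww_6_1, e7w_3_2, e7ww_3_2, e7w_4_2, e7ww_4_2, e7w_5_2, e7ww_5_2, e7w_6_2, e7ww_6_2, e7w_4_3, e7ww_4_3, e7w_5_3, e7ww_5_3, e7w_6_3, e7ww_6_3, e7w_5_4, e7ww_5_4, e7w_6_4, e7ww_6_4, e7w_6_5, e7ww_6_5,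
     e7q_0,e7q_1,e7q_2,e7q_3,e7q_4,e7q_5,e7q_6,e7qq_0,e7qq_1,e7qq_2,e7qq_3,e7qq_4,e7qq_5,e7qq_6,
     mul_neg, neg_mul, mul_zero, zero_mul, smul_neg, smul_zero, neg_neg, mul_smul_comm, smul_mul_assoc]
  module


set_option maxHeartbeats 1000000 in
lemma L2_2 (ξ : Module.Dual ℝ W7) :
    CliffordAlgebra.contractLeft ξ psi7 * P7 2 = (2:ℝ) • sigL (X7 (fun i => ξ (Pi.single i 1)) 2) := by
  rw [sigL_apply]
  simp only [psi7, phi7, map_add, map_sub, mul_assoc, ctr_e7_mul, ctr_e7,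
    Algebra.algebraMap_eq_smul_one, Fin.sum_univ_seven,
    sg_0, sg_1, sg_2, sg_3, sg_4, sg_5, sg_6, P7_0, P7_1, P7_2, P7_3, P7_4, P7_5, P7_6,
    X7_0_0, X7_0_1, X7_0_2, X7_0_3, X7_0_4, X7_0_5, X7_0_6, X7_1_0, X7_1_1, X7_1_2, X7_1_3, X7_1_4, X7_1_5, X7_1_6, X7_2_0, X7_2_1, X7_2_2, X7_2_3, X7_2_4, X7_2_5, X7_2_6, X7_3_0, X7_3_1, X7_3_2, X7_3_3, X7_3_4, X7_3_5, X7_3_6, X7_4_0, X7_4_1, X7_4_2, X7_4_3, X7_4_4, X7_4_5, X7_4_6, X7_5_0, X7_5_1, X7_5_2, X7_5_3, X7_5_4, X7_5_5, X7_5_6, X7_6_0, X7_6_1, X7_6_2, X7_6_3, X7_6_4, X7_6_5, X7_6_6,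
    smul_mul_assoc, mul_smul_comm, one_mul, mul_one, sub_mul, add_mul, mul_add, mul_sub,
    neg_mul, mul_neg, smul_smul, smul_zero, mul_zero, zero_mul, zero_smul, smul_neg, neg_neg,
    e7q_0, e7q_1, e7q_2, e7q_3, e7q_4, e7q_5, e7q_6, e7qq_0, e7qq_1, e7qq_2, e7qq_3, e7qq_4, e7qq_5, e7qq_6]
  simp only [e7w_1_0, e7ww_1_0, e7w_2_0, e7ww_2_0, e7w_3_0, e7ww_3_0, e7w_4_0, e7ww_4_0, e7w_5_0, e7ww_5_0, e7w_6_0, e7ww_6_0, e7w_2_1, e7ww_2_1, e7w_3_1, e7ww_3_1, e7w_4_1, e7ww_4_1, e7w_5_1, e7ww_5_1, e7w_6_1, e7ww_6_1, e7w_3_2, e7ww_3_2, e7w_4_2, e7ww_4_2, e7w_5_2, e7ww_5_2, e7w_6_2, e7ww_6_2, e7w_4_3, e7ww_4_3, e7w_5_3, e7ww_5_3, e7w_6_3, e7ww_6_3, e7w_5_4, e7ww_5_4, e7w_6_4, e7ww_6_4, e7w_6_5, e7ww_6_5,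
     e7q_0,e7q_1,e7q_2,e7q_3,e7q_4,e7q_5,e7q_6,e7qq_0,e7qq_1,e7qq_2,e7qq_3,e7qq_4,e7qq_5,e7qq_6,
     mul_neg, neg_mul, mul_zero, zero_mul, smul_neg, smul_zero, neg_neg, mul_smul_comm, smul_mul_assoc]
  module


set_option maxHeartbeats 1000000 in
lemma L2_3 (ξ : Module.Dual ℝ W7) :
    CliffordAlgebra.contractLeft ξ psi7 * P7 3 = (2:ℝ) • sigL (X7 (fun i => ξ (Pi.single i 1)) 3) := by
  rw [sigL_apply]
  simp only [psi7, phi7, map_add, map_sub, mul_assoc, ctr_e7_mul, ctr_e7,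
    Algebra.algebraMap_eq_smul_one, Fin.sum_univ_seven,
    sg_0, sg_1, sg_2, sg_3, sg_4, sg_5, sg_6, P7_0, P7_1, P7_2, P7_3, P7_4, P7_5, P7_6,
    X7_0_0, X7_0_1, X7_0_2, X7_0_3, X7_0_4, X7_0_5, X7_0_6, X7_1_0, X7_1_1, X7_1_2, X7_1_3, X7_1_4, X7_1_5, X7_1_6, X7_2_0, X7_2_1, X7_2_2, X7_2_3, X7_2_4, X7_2_5, X7_2_6, X7_3_0, X7_3_1, X7_3_2, X7_3_3, X7_3_4, X7_3_5, X7_3_6, X7_4_0, X7_4_1, X7_4_2, X7_4_3, X7_4_4, X7_4_5, X7_4_6, X7_5_0, X7_5_1, X7_5_2, X7_5_3, X7_5_4, X7_5_5, X7_5_6, X7_6_0, X7_6_1, X7_6_2, X7_6_3, X7_6_4, X7_6_5, X7_6_6,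
    smul_mul_assoc, mul_smul_comm, one_mul, mul_one, sub_mul, add_mul, mul_add, mul_sub,
    neg_mul, mul_neg, smul_smul, smul_zero, mul_zero, zero_mul, zero_smul, smul_neg, neg_neg,
    e7q_0, e7q_1, e7q_2, e7q_3, e7q_4, e7q_5, e7q_6, e7qq_0, e7qq_1, e7qq_2, e7qq_3, e7qq_4, e7qq_5, e7qq_6]
  simp only [e7w_1_0, e7ww_1_0, e7w_2_0, e7ww_2_0, e7w_3_0, e7ww_3_0, e7w_4_0, e7ww_4_0, e7w_5_0, e7ww_5_0, e7w_6_0, e7ww_6_0, e7w_2_1, e7ww_2_1, e7w_3_1, e7ww_3_1, e7w_4_1, e7ww_4_1, e7w_5_1, e7ww_5_1, e7w_6_1, e7ww_6_1, e7w_3_2, e7ww_3_2, e7w_4_2, e7ww_4_2, e7w_5_2, e7ww_5_2, e7w_6_2, e7ww_6_2, e7w_4_3, e7ww_4_3, e7w_5_3, e7ww_5_3, e7w_6_3, e7ww_6_3, e7w_5_4, e7ww_5_4, e7w_6_4, e7ww_6_4, e7w_6_5, e7ww_6_5,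
     e7q_0,e7q_1,e7q_2,e7q_3,e7q_4,e7q_5,e7q_6,e7qq_0,e7qq_1,e7qq_2,e7qq_3,e7qq_4,e7qq_5,e7qq_6,
     mul_neg, neg_mul, mul_zero, zero_mul, smul_neg, smul_zero, neg_neg, mul_smul_comm, smul_mul_assoc]
  module


set_option maxHeartbeats 1000000 in
lemma L2_4 (ξ : Module.Dual ℝ W7) :
    CliffordAlgebra.contractLeft ξ psi7 * P7 4 = (2:ℝ) • sigL (X7 (fun i => ξ (Pi.single i 1)) 4) := by
  rw [sigL_apply]
  simp only [psi7, phi7, map_add, map_sub, mul_assoc, ctr_e7_mul, ctr_e7,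
    Algebra.algebraMap_eq_smul_one, Fin.sum_univ_seven,
    sg_0, sg_1, sg_2, sg_3, sg_4, sg_5, sg_6, P7_0, P7_1, P7_2, P7_3, P7_4, P7_5, P7_6,
    X7_0_0, X7_0_1, X7_0_2, X7_0_3, X7_0_4, X7_0_5, X7_0_6, X7_1_0, X7_1_1, X7_1_2, X7_1_3, X7_1_4, X7_1_5, X7_1_6, X7_2_0, X7_2_1, X7_2_2, X7_2_3, X7_2_4, X7_2_5, X7_2_6, X7_3_0, X7_3_1, X7_3_2, X7_3_3, X7_3_4, X7_3_5, X7_3_6, X7_4_0, X7_4_1, X7_4_2, X7_4_3, X7_4_4, X7_4_5, X7_4_6, X7_5_0, X7_5_1, X7_5_2, X7_5_3, X7_5_4, X7_5_5, X7_5_6, X7_6_0, X7_6_1, X7_6_2, X7_6_3, X7_6_4, X7_6_5, X7_6_6,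
    smul_mul_assoc, mul_smul_comm, one_mul, mul_one, sub_mul, add_mul, mul_add, mul_sub,
    neg_mul, mul_neg, smul_smul, smul_zero, mul_zero, zero_mul, zero_smul, smul_neg, neg_neg,
    e7q_0, e7q_1, e7q_2, e7q_3, e7q_4, e7q_5, e7q_6, e7qq_0, e7qq_1, e7qq_2, e7qq_3, e7qq_4, e7qq_5, e7qq_6]
  simp only [e7w_1_0, e7ww_1_0, e7w_2_0, e7ww_2_0, e7w_3_0, e7ww_3_0, e7w_4_0, e7ww_4_0, e7w_5_0, e7ww_5_0, e7w_6_0, e7ww_6_0, e7w_2_1, e7ww_2_1, e7w_3_1, e7ww_3_1, e7w_4_1, e7ww_4_1, e7w_5_1, e7ww_5_1, e7w_6_1, e7ww_6_1, e7w_3_2, e7ww_3_2, e7w_4_2, e7ww_4_2, e7w_5_2, e7ww_5_2, e7w_6_2, e7ww_6_2, e7w_4_3, e7ww_4_3, e7w_5_3, e7ww_5_3, e7w_6_3, e7ww_6_3, e7w_5_4, e7ww_5_4, e7w_6_4, e7ww_6_4, e7w_6_5, e7ww_6_5,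
     e7q_0,e7q_1,e7q_2,e7q_3,e7q_4,e7q_5,e7q_6,e7qq_0,e7qq_1,e7qq_2,e7qq_3,e7qq_4,e7qq_5,e7qq_6,
     mul_neg, neg_mul, mul_zero, zero_mul, smul_neg, smul_zero, neg_neg, mul_smul_comm, smul_mul_assoc]
  module


set_option maxHeartbeats 1000000 in
lemma L2_5 (ξ : Module.Dual ℝ W7) :
    CliffordAlgebra.contractLeft ξ psi7 * P7 5 = (2:ℝ) • sigL (X7 (fun i => ξ (Pi.single i 1)) 5) := by
  rw [sigL_apply]
  simp only [psi7, phi7, map_add, map_sub, mul_assoc, ctr_e7_mul, ctr_e7,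
    Algebra.algebraMap_eq_smul_one, Fin.sum_univ_seven,
    sg_0, sg_1, sg_2, sg_3, sg_4, sg_5, sg_6, P7_0, P7_1, P7_2, P7_3, P7_4, P7_5, P7_6,
    X7_0_0, X7_0_1, X7_0_2, X7_0_3, X7_0_4, X7_0_5, X7_0_6, X7_1_0, X7_1_1, X7_1_2, X7_1_3, X7_1_4, X7_1_5, X7_1_6, X7_2_0, X7_2_1, X7_2_2, X7_2_3, X7_2_4, X7_2_5, X7_2_6, X7_3_0, X7_3_1, X7_3_2, X7_3_3, X7_3_4, X7_3_5, X7_3_6, X7_4_0, X7_4_1, X7_4_2, X7_4_3, X7_4_4, X7_4_5, X7_4_6, X7_5_0, X7_5_1, X7_5_2, X7_5_3, X7_5_4, X7_5_5, X7_5_6, X7_6_0, X7_6_1, X7_6_2, X7_6_3, X7_6_4, X7_6_5, X7_6_6,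
    smul_mul_assoc, mul_smul_comm, one_mul, mul_one, sub_mul, add_mul, mul_add, mul_sub,
    neg_mul, mul_neg, smul_smul, smul_zero, mul_zero, zero_mul, zero_smul, smul_neg, neg_neg,
    e7q_0, e7q_1, e7q_2, e7q_3, e7q_4, e7q_5, e7q_6, e7qq_0, e7qq_1, e7qq_2, e7qq_3, e7qq_4, e7qq_5, e7qq_6]
  simp only [e7w_1_0, e7ww_1_0, e7w_2_0, e7ww_2_0, e7w_3_0, e7ww_3_0, e7w_4_0, e7ww_4_0, e7w_5_0, e7ww_5_0, e7w_6_0, e7ww_6_0, e7w_2_1, e7ww_2_1, e7w_3_1, e7ww_3_1, e7w_4_1, e7ww_4_1, e7w_5_1, e7ww_5_1, e7w_6_1, e7ww_6_1, e7w_3_2, e7ww_3_2, e7w_4_2, e7ww_4_2, e7w_5_2, e7ww_5_2, e7w_6_2, e7ww_6_2, e7w_4_3, e7ww_4_3, e7w_5_3, e7ww_5_3, e7w_6_3, e7ww_6_3, e7w_5_4, e7ww_5_4, e7w_6_4, e7ww_6_4, e7w_6_5, e7ww_6_5,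
     e7q_0,e7q_1,e7q_2,e7q_3,e7q_4,e7q_5,e7q_6,e7qq_0,e7qq_1,e7qq_2,e7qq_3,e7qq_4,e7qq_5,e7qq_6,
     mul_neg, neg_mul, mul_zero, zero_mul, smul_neg, smul_zero, neg_neg, mul_smul_comm, smul_mul_assoc]
  module


set_option maxHeartbeats 1000000 in
lemma L2_6 (ξ : Module.Dual ℝ W7) :
    CliffordAlgebra.contractLeft ξ psi7 * P7 6 = (2:ℝ) • sigL (X7 (fun i => ξ (Pi.single i 1)) 6) := by
  rw [sigL_apply]
  simp only [psi7, phi7, map_add, map_sub, mul_assoc, ctr_e7_mul, ctr_e7,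
    Algebra.algebraMap_eq_smul_one, Fin.sum_univ_seven,
    sg_0, sg_1, sg_2, sg_3, sg_4, sg_5, sg_6, P7_0, P7_1, P7_2, P7_3, P7_4, P7_5, P7_6,
    X7_0_0, X7_0_1, X7_0_2, X7_0_3, X7_0_4, X7_0_5, X7_0_6, X7_1_0, X7_1_1, X7_1_2, X7_1_3, X7_1_4, X7_1_5, X7_1_6, X7_2_0, X7_2_1, X7_2_2, X7_2_3, X7_2_4, X7_2_5, X7_2_6, X7_3_0, X7_3_1, X7_3_2, X7_3_3, X7_3_4, X7_3_5, X7_3_6, X7_4_0, X7_4_1, X7_4_2, X7_4_3, X7_4_4, X7_4_5, X7_4_6, X7_5_0, X7_5_1, X7_5_2, X7_5_3, X7_5_4, X7_5_5, X7_5_6, X7_6_0, X7_6_1, X7_6_2, X7_6_3, X7_6_4, X7_6_5, X7_6_6,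
    smul_mul_assoc, mul_smul_comm, one_mul, mul_one, sub_mul, add_mul, mul_add, mul_sub,
    neg_mul, mul_neg, smul_smul, smul_zero, mul_zero, zero_mul, zero_smul, smul_neg, neg_neg,
    e7q_0, e7q_1, e7q_2, e7q_3, e7q_4, e7q_5, e7q_6, e7qq_0, e7qq_1, e7qq_2, e7qq_3, e7qq_4, e7qq_5, e7qq_6]
  simp only [e7w_1_0, e7ww_1_0, e7w_2_0, e7ww_2_0, e7w_3_0, e7ww_3_0, e7w_4_0, e7ww_4_0, e7w_5_0, e7ww_5_0, e7w_6_0, e7ww_6_0, e7w_2_1, e7ww_2_1, e7w_3_1, e7ww_3_1, e7w_4_1, e7ww_4_1, e7w_5_1, e7ww_5_1, e7w_6_1, e7ww_6_1, e7w_3_2, e7ww_3_2, e7w_4_2, e7ww_4_2, e7w_5_2, e7ww_5_2, e7w_6_2, e7ww_6_2, e7w_4_3, e7ww_4_3, e7w_5_3, e7ww_5_3, e7w_6_3, e7ww_6_3, e7w_5_4, e7ww_5_4, e7w_6_4, e7ww_6_4, e7w_6_5, e7ww_6_5,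
     e7q_0,e7q_1,e7q_2,e7q_3,e7q_4,e7q_5,e7q_6,e7qq_0,e7qq_1,e7qq_2,e7qq_3,e7qq_4,e7qq_5,e7qq_6,
     mul_neg, neg_mul, mul_zero, zero_mul, smul_neg, smul_zero, neg_neg, mul_smul_comm, smul_mul_assoc]
  module


lemma L2 (ξ : Module.Dual ℝ W7) (j : Fin 7) :
    CliffordAlgebra.contractLeft ξ psi7 * P7 j = (2:ℝ) • sigL (X7 (fun i => ξ (Pi.single i 1)) j) := by
  fin_cases j
  · exact L2_0 ξ
  · exact L2_1 ξ
  · exact L2_2 ξ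
  · exact L2_3 ξ
  · exact L2_4 ξ
  · exact L2_5 ξ
  · exact L2_6 ξ

lemma Vk_0_0 (c : W7) :
    c 0 * c 0 - ∑ j : Fin 7, X7 c 0 j * X7 c j 0 = (∑ i : Fin 7, c i ^ 2) * (Pi.single 0 1 : W7) 0 := by
  have hs : (Pi.single (0:Fin 7) (1:ℝ) : W7) 0 = 1 := rfl
  simp only [Fin.sum_univ_seven, X7_0_0, X7_0_1, X7_0_2, X7_0_3, X7_0_4, X7_0_5, X7_0_6, X7_0_0, X7_1_0, X7_2_0, X7_3_0, X7_4_0, X7_5_0, X7_6_0, hs]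
  ring

lemma Vk_0_1 (c : W7) :
    c 0 * c 1 - ∑ j : Fin 7, X7 c 0 j * X7 c j 1 = (∑ i : Fin 7, c i ^ 2) * (Pi.single 0 1 : W7) 1 := by
  have hs : (Pi.single (0:Fin 7) (1:ℝ) : W7) 1 = 0 := rfl
  simp only [Fin.sum_univ_seven, X7_0_0, X7_0_1, X7_0_2, X7_0_3, X7_0_4, X7_0_5, X7_0_6, X7_0_1, X7_1_1, X7_2_1, X7_3_1, X7_4_1, X7_5_1, X7_6_1, hs]
  ring

lemma Vk_0_2 (c : W7) :
    c 0 * c 2 - ∑ j : Fin 7, X7 c 0 j * X7 c j 2 = (∑ i : Fin 7, c i ^ 2) * (Pi.single 0 1 : W7) 2 := by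
  have hs : (Pi.single (0:Fin 7) (1:ℝ) : W7) 2 = 0 := rfl
  simp only [Fin.sum_univ_seven, X7_0_0, X7_0_1, X7_0_2, X7_0_3, X7_0_4, X7_0_5, X7_0_6, X7_0_2, X7_1_2, X7_2_2, X7_3_2, X7_4_2, X7_5_2, X7_6_2, hs]
  ring

lemma Vk_0_3 (c : W7) :
    c 0 * c 3 - ∑ j : Fin 7, X7 c 0 j * X7 c j 3 = (∑ i : Fin 7, c i ^ 2) * (Pi.single 0 1 : W7) 3 := by
  have hs : (Pi.single (0:Fin 7) (1:ℝ) : W7) 3 = 0 := rfl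
  simp only [Fin.sum_univ_seven, X7_0_0, X7_0_1, X7_0_2, X7_0_3, X7_0_4, X7_0_5, X7_0_6, X7_0_3, X7_1_3, X7_2_3, X7_3_3, X7_4_3, X7_5_3, X7_6_3, hs]
  ring

lemma Vk_0_4 (c : W7) :
    c 0 * c 4 - ∑ j : Fin 7, X7 c 0 j * X7 c j 4 = (∑ i : Fin 7, c i ^ 2) * (Pi.single 0 1 : W7) 4 := by
  have hs : (Pi.single (0:Fin 7) (1:ℝ) : W7) 4 = 0 := rfl
  simp only [Fin.sum_univ_seven, X7_0_0, X7_0_1, X7_0_2, X7_0_3, X7_0_4, X7_0_5, X7_0_6, X7_0_4, X7_1_4, X7_2_4, X7_3_4, X7_4_4, X7_5_4, X7_6_4, hs]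
  ring

lemma Vk_0_5 (c : W7) :
    c 0 * c 5 - ∑ j : Fin 7, X7 c 0 j * X7 c j 5 = (∑ i : Fin 7, c i ^ 2) * (Pi.single 0 1 : W7) 5 := by
  have hs : (Pi.single (0:Fin 7) (1:ℝ) : W7) 5 = 0 := rfl
  simp only [Fin.sum_univ_seven, X7_0_0, X7_0_1, X7_0_2, X7_0_3, X7_0_4, X7_0_5, X7_0_6, X7_0_5, X7_1_5, X7_2_5, X7_3_5, X7_4_5, X7_5_5, X7_6_5, hs]
  ring

lemma Vk_0_6 (c : W7) :
    c 0 * c 6 - ∑ j : Fin 7, X7 c 0 j * X7 c j 6 = (∑ i : Fin 7, c i ^ 2) * (Pi.single 0 1 : W7) 6 := by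
  have hs : (Pi.single (0:Fin 7) (1:ℝ) : W7) 6 = 0 := rfl
  simp only [Fin.sum_univ_seven, X7_0_0, X7_0_1, X7_0_2, X7_0_3, X7_0_4, X7_0_5, X7_0_6, X7_0_6, X7_1_6, X7_2_6, X7_3_6, X7_4_6, X7_5_6, X7_6_6, hs]
  ring

lemma Vk_1_0 (c : W7) :
    c 1 * c 0 - ∑ j : Fin 7, X7 c 1 j * X7 c j 0 = (∑ i : Fin 7, c i ^ 2) * (Pi.single 1 1 : W7) 0 := by
  have hs : (Pi.single (1:Fin 7) (1:ℝ) : W7) 0 = 0 := rfl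
  simp only [Fin.sum_univ_seven, X7_1_0, X7_1_1, X7_1_2, X7_1_3, X7_1_4, X7_1_5, X7_1_6, X7_0_0, X7_1_0, X7_2_0, X7_3_0, X7_4_0, X7_5_0, X7_6_0, hs]
  ring

lemma Vk_1_1 (c : W7) :
    c 1 * c 1 - ∑ j : Fin 7, X7 c 1 j * X7 c j 1 = (∑ i : Fin 7, c i ^ 2) * (Pi.single 1 1 : W7) 1 := by
  have hs : (Pi.single (1:Fin 7) (1:ℝ) : W7) 1 = 1 := rfl
  simp only [Fin.sum_univ_seven, X7_1_0, X7_1_1, X7_1_2, X7_1_3, X7_1_4, X7_1_5, X7_1_6, X7_0_1, X7_1_1, X7_2_1, X7_3_1, X7_4_1, X7_5_1, X7_6_1, hs]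
  ring

lemma Vk_1_2 (c : W7) :
    c 1 * c 2 - ∑ j : Fin 7, X7 c 1 j * X7 c j 2 = (∑ i : Fin 7, c i ^ 2) * (Pi.single 1 1 : W7) 2 := by
  have hs : (Pi.single (1:Fin 7) (1:ℝ) : W7) 2 = 0 := rfl
  simp only [Fin.sum_univ_seven, X7_1_0, X7_1_1, X7_1_2, X7_1_3, X7_1_4, X7_1_5, X7_1_6, X7_0_2, X7_1_2, X7_2_2, X7_3_2, X7_4_2, X7_5_2, X7_6_2, hs]
  ring

lemma Vk_1_3 (c : W7) :
    c 1 * c 3 - ∑ j : Fin 7, X7 c 1 j * X7 c j 3 = (∑ i : Fin 7, c i ^ 2) * (Pi.single 1 1 : W7) 3 := by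
  have hs : (Pi.single (1:Fin 7) (1:ℝ) : W7) 3 = 0 := rfl
  simp only [Fin.sum_univ_seven, X7_1_0, X7_1_1, X7_1_2, X7_1_3, X7_1_4, X7_1_5, X7_1_6, X7_0_3, X7_1_3, X7_2_3, X7_3_3, X7_4_3, X7_5_3, X7_6_3, hs]
  ring

lemma Vk_1_4 (c : W7) :
    c 1 * c 4 - ∑ j : Fin 7, X7 c 1 j * X7 c j 4 = (∑ i : Fin 7, c i ^ 2) * (Pi.single 1 1 : W7) 4 := by
  have hs : (Pi.single (1:Fin 7) (1:ℝ) : W7) 4 = 0 := rfl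
  simp only [Fin.sum_univ_seven, X7_1_0, X7_1_1, X7_1_2, X7_1_3, X7_1_4, X7_1_5, X7_1_6, X7_0_4, X7_1_4, X7_2_4, X7_3_4, X7_4_4, X7_5_4, X7_6_4, hs]
  ring

lemma Vk_1_5 (c : W7) :
    c 1 * c 5 - ∑ j : Fin 7, X7 c 1 j * X7 c j 5 = (∑ i : Fin 7, c i ^ 2) * (Pi.single 1 1 : W7) 5 := by
  have hs : (Pi.single (1:Fin 7) (1:ℝ) : W7) 5 = 0 := rfl
  simp only [Fin.sum_univ_seven, X7_1_0, X7_1_1, X7_1_2, X7_1_3, X7_1_4, X7_1_5, X7_1_6, X7_0_5, X7_1_5, X7_2_5, X7_3_5, X7_4_5, X7_5_5, X7_6_5, hs]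
  ring

lemma Vk_1_6 (c : W7) :
    c 1 * c 6 - ∑ j : Fin 7, X7 c 1 j * X7 c j 6 = (∑ i : Fin 7, c i ^ 2) * (Pi.single 1 1 : W7) 6 := by
  have hs : (Pi.single (1:Fin 7) (1:ℝ) : W7) 6 = 0 := rfl
  simp only [Fin.sum_univ_seven, X7_1_0, X7_1_1, X7_1_2, X7_1_3, X7_1_4, X7_1_5, X7_1_6, X7_0_6, X7_1_6, X7_2_6, X7_3_6, X7_4_6, X7_5_6, X7_6_6, hs]
  ring

lemma Vk_2_0 (c : W7) :
    c 2 * c 0 - ∑ j : Fin 7, X7 c 2 j * X7 c j 0 = (∑ i : Fin 7, c i ^ 2) * (Pi.single 2 1 : W7) 0 := by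
  have hs : (Pi.single (2:Fin 7) (1:ℝ) : W7) 0 = 0 := rfl
  simp only [Fin.sum_univ_seven, X7_2_0, X7_2_1, X7_2_2, X7_2_3, X7_2_4, X7_2_5, X7_2_6, X7_0_0, X7_1_0, X7_2_0, X7_3_0, X7_4_0, X7_5_0, X7_6_0, hs]
  ring

lemma Vk_2_1 (c : W7) :
    c 2 * c 1 - ∑ j : Fin 7, X7 c 2 j * X7 c j 1 = (∑ i : Fin 7, c i ^ 2) * (Pi.single 2 1 : W7) 1 := by
  have hs : (Pi.single (2:Fin 7) (1:ℝ) : W7) 1 = 0 := rfl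
  simp only [Fin.sum_univ_seven, X7_2_0, X7_2_1, X7_2_2, X7_2_3, X7_2_4, X7_2_5, X7_2_6, X7_0_1, X7_1_1, X7_2_1, X7_3_1, X7_4_1, X7_5_1, X7_6_1, hs]
  ring

lemma Vk_2_2 (c : W7) :
    c 2 * c 2 - ∑ j : Fin 7, X7 c 2 j * X7 c j 2 = (∑ i : Fin 7, c i ^ 2) * (Pi.single 2 1 : W7) 2 := by
  have hs : (Pi.single (2:Fin 7) (1:ℝ) : W7) 2 = 1 := rfl
  simp only [Fin.sum_univ_seven, X7_2_0, X7_2_1, X7_2_2, X7_2_3, X7_2_4, X7_2_5, X7_2_6, X7_0_2, X7_1_2, X7_2_2, X7_3_2, X7_4_2, X7_5_2, X7_6_2, hs]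
  ring

lemma Vk_2_3 (c : W7) :
    c 2 * c 3 - ∑ j : Fin 7, X7 c 2 j * X7 c j 3 = (∑ i : Fin 7, c i ^ 2) * (Pi.single 2 1 : W7) 3 := by
  have hs : (Pi.single (2:Fin 7) (1:ℝ) : W7) 3 = 0 := rfl
  simp only [Fin.sum_univ_seven, X7_2_0, X7_2_1, X7_2_2, X7_2_3, X7_2_4, X7_2_5, X7_2_6, X7_0_3, X7_1_3, X7_2_3, X7_3_3, X7_4_3, X7_5_3, X7_6_3, hs]
  ring

lemma Vk_2_4 (c : W7) :
    c 2 * c 4 - ∑ j : Fin 7, X7 c 2 j * X7 c j 4 = (∑ i : Fin 7, c i ^ 2) * (Pi.single 2 1 : W7) 4 := by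
  have hs : (Pi.single (2:Fin 7) (1:ℝ) : W7) 4 = 0 := rfl
  simp only [Fin.sum_univ_seven, X7_2_0, X7_2_1, X7_2_2, X7_2_3, X7_2_4, X7_2_5, X7_2_6, X7_0_4, X7_1_4, X7_2_4, X7_3_4, X7_4_4, X7_5_4, X7_6_4, hs]
  ring

lemma Vk_2_5 (c : W7) :
    c 2 * c 5 - ∑ j : Fin 7, X7 c 2 j * X7 c j 5 = (∑ i : Fin 7, c i ^ 2) * (Pi.single 2 1 : W7) 5 := by
  have hs : (Pi.single (2:Fin 7) (1:ℝ) : W7) 5 = 0 := rfl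
  simp only [Fin.sum_univ_seven, X7_2_0, X7_2_1, X7_2_2, X7_2_3, X7_2_4, X7_2_5, X7_2_6, X7_0_5, X7_1_5, X7_2_5, X7_3_5, X7_4_5, X7_5_5, X7_6_5, hs]
  ring

lemma Vk_2_6 (c : W7) :
    c 2 * c 6 - ∑ j : Fin 7, X7 c 2 j * X7 c j 6 = (∑ i : Fin 7, c i ^ 2) * (Pi.single 2 1 : W7) 6 := by
  have hs : (Pi.single (2:Fin 7) (1:ℝ) : W7) 6 = 0 := rfl
  simp only [Fin.sum_univ_seven, X7_2_0, X7_2_1, X7_2_2, X7_2_3, X7_2_4, X7_2_5, X7_2_6, X7_0_6, X7_1_6, X7_2_6, X7_3_6, X7_4_6, X7_5_6, X7_6_6, hs]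
  ring

lemma Vk_3_0 (c : W7) :
    c 3 * c 0 - ∑ j : Fin 7, X7 c 3 j * X7 c j 0 = (∑ i : Fin 7, c i ^ 2) * (Pi.single 3 1 : W7) 0 := by
  have hs : (Pi.single (3:Fin 7) (1:ℝ) : W7) 0 = 0 := rfl
  simp only [Fin.sum_univ_seven, X7_3_0, X7_3_1, X7_3_2, X7_3_3, X7_3_4, X7_3_5, X7_3_6, X7_0_0, X7_1_0, X7_2_0, X7_3_0, X7_4_0, X7_5_0, X7_6_0, hs]
  ring

lemma Vk_3_1 (c : W7) :
    c 3 * c 1 - ∑ j : Fin 7, X7 c 3 j * X7 c j 1 = (∑ i : Fin 7, c i ^ 2) * (Pi.single 3 1 : W7) 1 := by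
  have hs : (Pi.single (3:Fin 7) (1:ℝ) : W7) 1 = 0 := rfl
  simp only [Fin.sum_univ_seven, X7_3_0, X7_3_1, X7_3_2, X7_3_3, X7_3_4, X7_3_5, X7_3_6, X7_0_1, X7_1_1, X7_2_1, X7_3_1, X7_4_1, X7_5_1, X7_6_1, hs]
  ring

lemma Vk_3_2 (c : W7) :
    c 3 * c 2 - ∑ j : Fin 7, X7 c 3 j * X7 c j 2 = (∑ i : Fin 7, c i ^ 2) * (Pi.single 3 1 : W7) 2 := by
  have hs : (Pi.single (3:Fin 7) (1:ℝ) : W7) 2 = 0 := rfl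
  simp only [Fin.sum_univ_seven, X7_3_0, X7_3_1, X7_3_2, X7_3_3, X7_3_4, X7_3_5, X7_3_6, X7_0_2, X7_1_2, X7_2_2, X7_3_2, X7_4_2, X7_5_2, X7_6_2, hs]
  ring

lemma Vk_3_3 (c : W7) :
    c 3 * c 3 - ∑ j : Fin 7, X7 c 3 j * X7 c j 3 = (∑ i : Fin 7, c i ^ 2) * (Pi.single 3 1 : W7) 3 := by
  have hs : (Pi.single (3:Fin 7) (1:ℝ) : W7) 3 = 1 := rfl
  simp only [Fin.sum_univ_seven, X7_3_0, X7_3_1, X7_3_2, X7_3_3, X7_3_4, X7_3_5, X7_3_6, X7_0_3, X7_1_3, X7_2_3, X7_3_3, X7_4_3, X7_5_3, X7_6_3, hs]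
  ring

lemma Vk_3_4 (c : W7) :
    c 3 * c 4 - ∑ j : Fin 7, X7 c 3 j * X7 c j 4 = (∑ i : Fin 7, c i ^ 2) * (Pi.single 3 1 : W7) 4 := by
  have hs : (Pi.single (3:Fin 7) (1:ℝ) : W7) 4 = 0 := rfl
  simp only [Fin.sum_univ_seven, X7_3_0, X7_3_1, X7_3_2, X7_3_3, X7_3_4, X7_3_5, X7_3_6, X7_0_4, X7_1_4, X7_2_4, X7_3_4, X7_4_4, X7_5_4, X7_6_4, hs]
  ring

lemma Vk_3_5 (c : W7) :
    c 3 * c 5 - ∑ j : Fin 7, X7 c 3 j * X7 c j 5 = (∑ i : Fin 7, c i ^ 2) * (Pi.single 3 1 : W7) 5 := by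
  have hs : (Pi.single (3:Fin 7) (1:ℝ) : W7) 5 = 0 := rfl
  simp only [Fin.sum_univ_seven, X7_3_0, X7_3_1, X7_3_2, X7_3_3, X7_3_4, X7_3_5, X7_3_6, X7_0_5, X7_1_5, X7_2_5, X7_3_5, X7_4_5, X7_5_5, X7_6_5, hs]
  ring

lemma Vk_3_6 (c : W7) :
    c 3 * c 6 - ∑ j : Fin 7, X7 c 3 j * X7 c j 6 = (∑ i : Fin 7, c i ^ 2) * (Pi.single 3 1 : W7) 6 := by
  have hs : (Pi.single (3:Fin 7) (1:ℝ) : W7) 6 = 0 := rfl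
  simp only [Fin.sum_univ_seven, X7_3_0, X7_3_1, X7_3_2, X7_3_3, X7_3_4, X7_3_5, X7_3_6, X7_0_6, X7_1_6, X7_2_6, X7_3_6, X7_4_6, X7_5_6, X7_6_6, hs]
  ring

lemma Vk_4_0 (c : W7) :
    c 4 * c 0 - ∑ j : Fin 7, X7 c 4 j * X7 c j 0 = (∑ i : Fin 7, c i ^ 2) * (Pi.single 4 1 : W7) 0 := by
  have hs : (Pi.single (4:Fin 7) (1:ℝ) : W7) 0 = 0 := rfl
  simp only [Fin.sum_univ_seven, X7_4_0, X7_4_1, X7_4_2, X7_4_3, X7_4_4, X7_4_5, X7_4_6, X7_0_0, X7_1_0, X7_2_0, X7_3_0, X7_4_0, X7_5_0, X7_6_0, hs]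
  ring

lemma Vk_4_1 (c : W7) :
    c 4 * c 1 - ∑ j : Fin 7, X7 c 4 j * X7 c j 1 = (∑ i : Fin 7, c i ^ 2) * (Pi.single 4 1 : W7) 1 := by
  have hs : (Pi.single (4:Fin 7) (1:ℝ) : W7) 1 = 0 := rfl
  simp only [Fin.sum_univ_seven, X7_4_0, X7_4_1, X7_4_2, X7_4_3, X7_4_4, X7_4_5, X7_4_6, X7_0_1, X7_1_1, X7_2_1, X7_3_1, X7_4_1, X7_5_1, X7_6_1, hs]
  ring

lemma Vk_4_2 (c : W7) :
    c 4 * c 2 - ∑ j : Fin 7, X7 c 4 j * X7 c j 2 = (∑ i : Fin 7, c i ^ 2) * (Pi.single 4 1 : W7) 2 := by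
  have hs : (Pi.single (4:Fin 7) (1:ℝ) : W7) 2 = 0 := rfl
  simp only [Fin.sum_univ_seven, X7_4_0, X7_4_1, X7_4_2, X7_4_3, X7_4_4, X7_4_5, X7_4_6, X7_0_2, X7_1_2, X7_2_2, X7_3_2, X7_4_2, X7_5_2, X7_6_2, hs]
  ring

lemma Vk_4_3 (c : W7) :
    c 4 * c 3 - ∑ j : Fin 7, X7 c 4 j * X7 c j 3 = (∑ i : Fin 7, c i ^ 2) * (Pi.single 4 1 : W7) 3 := by
  have hs : (Pi.single (4:Fin 7) (1:ℝ) : W7) 3 = 0 := rfl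
  simp only [Fin.sum_univ_seven, X7_4_0, X7_4_1, X7_4_2, X7_4_3, X7_4_4, X7_4_5, X7_4_6, X7_0_3, X7_1_3, X7_2_3, X7_3_3, X7_4_3, X7_5_3, X7_6_3, hs]
  ring

lemma Vk_4_4 (c : W7) :
    c 4 * c 4 - ∑ j : Fin 7, X7 c 4 j * X7 c j 4 = (∑ i : Fin 7, c i ^ 2) * (Pi.single 4 1 : W7) 4 := by
  have hs : (Pi.single (4:Fin 7) (1:ℝ) : W7) 4 = 1 := rfl
  simp only [Fin.sum_univ_seven, X7_4_0, X7_4_1, X7_4_2, X7_4_3, X7_4_4, X7_4_5, X7_4_6, X7_0_4, X7_1_4, X7_2_4, X7_3_4, X7_4_4, X7_5_4, X7_6_4, hs]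
  ring

lemma Vk_4_5 (c : W7) :
    c 4 * c 5 - ∑ j : Fin 7, X7 c 4 j * X7 c j 5 = (∑ i : Fin 7, c i ^ 2) * (Pi.single 4 1 : W7) 5 := by
  have hs : (Pi.single (4:Fin 7) (1:ℝ) : W7) 5 = 0 := rfl
  simp only [Fin.sum_univ_seven, X7_4_0, X7_4_1, X7_4_2, X7_4_3, X7_4_4, X7_4_5, X7_4_6, X7_0_5, X7_1_5, X7_2_5, X7_3_5, X7_4_5, X7_5_5, X7_6_5, hs]
  ring

lemma Vk_4_6 (c : W7) :
    c 4 * c 6 - ∑ j : Fin 7, X7 c 4 j * X7 c j 6 = (∑ i : Fin 7, c i ^ 2) * (Pi.single 4 1 : W7) 6 := by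
  have hs : (Pi.single (4:Fin 7) (1:ℝ) : W7) 6 = 0 := rfl
  simp only [Fin.sum_univ_seven, X7_4_0, X7_4_1, X7_4_2, X7_4_3, X7_4_4, X7_4_5, X7_4_6, X7_0_6, X7_1_6, X7_2_6, X7_3_6, X7_4_6, X7_5_6, X7_6_6, hs]
  ring

lemma Vk_5_0 (c : W7) :
    c 5 * c 0 - ∑ j : Fin 7, X7 c 5 j * X7 c j 0 = (∑ i : Fin 7, c i ^ 2) * (Pi.single 5 1 : W7) 0 := by
  have hs : (Pi.single (5:Fin 7) (1:ℝ) : W7) 0 = 0 := rfl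
  simp only [Fin.sum_univ_seven, X7_5_0, X7_5_1, X7_5_2, X7_5_3, X7_5_4, X7_5_5, X7_5_6, X7_0_0, X7_1_0, X7_2_0, X7_3_0, X7_4_0, X7_5_0, X7_6_0, hs]
  ring

lemma Vk_5_1 (c : W7) :
    c 5 * c 1 - ∑ j : Fin 7, X7 c 5 j * X7 c j 1 = (∑ i : Fin 7, c i ^ 2) * (Pi.single 5 1 : W7) 1 := by
  have hs : (Pi.single (5:Fin 7) (1:ℝ) : W7) 1 = 0 := rfl
  simp only [Fin.sum_univ_seven, X7_5_0, X7_5_1, X7_5_2, X7_5_3, X7_5_4, X7_5_5, X7_5_6, X7_0_1, X7_1_1, X7_2_1, X7_3_1, X7_4_1, X7_5_1, X7_6_1, hs]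
  ring

lemma Vk_5_2 (c : W7) :
    c 5 * c 2 - ∑ j : Fin 7, X7 c 5 j * X7 c j 2 = (∑ i : Fin 7, c i ^ 2) * (Pi.single 5 1 : W7) 2 := by
  have hs : (Pi.single (5:Fin 7) (1:ℝ) : W7) 2 = 0 := rfl
  simp only [Fin.sum_univ_seven, X7_5_0, X7_5_1, X7_5_2, X7_5_3, X7_5_4, X7_5_5, X7_5_6, X7_0_2, X7_1_2, X7_2_2, X7_3_2, X7_4_2, X7_5_2, X7_6_2, hs]
  ring

lemma Vk_5_3 (c : W7) :
    c 5 * c 3 - ∑ j : Fin 7, X7 c 5 j * X7 c j 3 = (∑ i : Fin 7, c i ^ 2) * (Pi.single 5 1 : W7) 3 := by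
  have hs : (Pi.single (5:Fin 7) (1:ℝ) : W7) 3 = 0 := rfl
  simp only [Fin.sum_univ_seven, X7_5_0, X7_5_1, X7_5_2, X7_5_3, X7_5_4, X7_5_5, X7_5_6, X7_0_3, X7_1_3, X7_2_3, X7_3_3, X7_4_3, X7_5_3, X7_6_3, hs]
  ring

lemma Vk_5_4 (c : W7) :
    c 5 * c 4 - ∑ j : Fin 7, X7 c 5 j * X7 c j 4 = (∑ i : Fin 7, c i ^ 2) * (Pi.single 5 1 : W7) 4 := by
  have hs : (Pi.single (5:Fin 7) (1:ℝ) : W7) 4 = 0 := rfl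
  simp only [Fin.sum_univ_seven, X7_5_0, X7_5_1, X7_5_2, X7_5_3, X7_5_4, X7_5_5, X7_5_6, X7_0_4, X7_1_4, X7_2_4, X7_3_4, X7_4_4, X7_5_4, X7_6_4, hs]
  ring

lemma Vk_5_5 (c : W7) :
    c 5 * c 5 - ∑ j : Fin 7, X7 c 5 j * X7 c j 5 = (∑ i : Fin 7, c i ^ 2) * (Pi.single 5 1 : W7) 5 := by
  have hs : (Pi.single (5:Fin 7) (1:ℝ) : W7) 5 = 1 := rfl
  simp only [Fin.sum_univ_seven, X7_5_0, X7_5_1, X7_5_2, X7_5_3, X7_5_4, X7_5_5, X7_5_6, X7_0_5, X7_1_5, X7_2_5, X7_3_5, X7_4_5, X7_5_5, X7_6_5, hs]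
  ring

lemma Vk_5_6 (c : W7) :
    c 5 * c 6 - ∑ j : Fin 7, X7 c 5 j * X7 c j 6 = (∑ i : Fin 7, c i ^ 2) * (Pi.single 5 1 : W7) 6 := by
  have hs : (Pi.single (5:Fin 7) (1:ℝ) : W7) 6 = 0 := rfl
  simp only [Fin.sum_univ_seven, X7_5_0, X7_5_1, X7_5_2, X7_5_3, X7_5_4, X7_5_5, X7_5_6, X7_0_6, X7_1_6, X7_2_6, X7_3_6, X7_4_6, X7_5_6, X7_6_6, hs]
  ring

lemma Vk_6_0 (c : W7) :
    c 6 * c 0 - ∑ j : Fin 7, X7 c 6 j * X7 c j 0 = (∑ i : Fin 7, c i ^ 2) * (Pi.single 6 1 : W7) 0 := by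
  have hs : (Pi.single (6:Fin 7) (1:ℝ) : W7) 0 = 0 := rfl
  simp only [Fin.sum_univ_seven, X7_6_0, X7_6_1, X7_6_2, X7_6_3, X7_6_4, X7_6_5, X7_6_6, X7_0_0, X7_1_0, X7_2_0, X7_3_0, X7_4_0, X7_5_0, X7_6_0, hs]
  ring

lemma Vk_6_1 (c : W7) :
    c 6 * c 1 - ∑ j : Fin 7, X7 c 6 j * X7 c j 1 = (∑ i : Fin 7, c i ^ 2) * (Pi.single 6 1 : W7) 1 := by
  have hs : (Pi.single (6:Fin 7) (1:ℝ) : W7) 1 = 0 := rfl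
  simp only [Fin.sum_univ_seven, X7_6_0, X7_6_1, X7_6_2, X7_6_3, X7_6_4, X7_6_5, X7_6_6, X7_0_1, X7_1_1, X7_2_1, X7_3_1, X7_4_1, X7_5_1, X7_6_1, hs]
  ring

lemma Vk_6_2 (c : W7) :
    c 6 * c 2 - ∑ j : Fin 7, X7 c 6 j * X7 c j 2 = (∑ i : Fin 7, c i ^ 2) * (Pi.single 6 1 : W7) 2 := by
  have hs : (Pi.single (6:Fin 7) (1:ℝ) : W7) 2 = 0 := rfl
  simp only [Fin.sum_univ_seven, X7_6_0, X7_6_1, X7_6_2, X7_6_3, X7_6_4, X7_6_5, X7_6_6, X7_0_2, X7_1_2, X7_2_2, X7_3_2, X7_4_2, X7_5_2, X7_6_2, hs]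
  ring

lemma Vk_6_3 (c : W7) :
    c 6 * c 3 - ∑ j : Fin 7, X7 c 6 j * X7 c j 3 = (∑ i : Fin 7, c i ^ 2) * (Pi.single 6 1 : W7) 3 := by
  have hs : (Pi.single (6:Fin 7) (1:ℝ) : W7) 3 = 0 := rfl
  simp only [Fin.sum_univ_seven, X7_6_0, X7_6_1, X7_6_2, X7_6_3, X7_6_4, X7_6_5, X7_6_6, X7_0_3, X7_1_3, X7_2_3, X7_3_3, X7_4_3, X7_5_3, X7_6_3, hs]
  ring

lemma Vk_6_4 (c : W7) :
    c 6 * c 4 - ∑ j : Fin 7, X7 c 6 j * X7 c j 4 = (∑ i : Fin 7, c i ^ 2) * (Pi.single 6 1 : W7) 4 := by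
  have hs : (Pi.single (6:Fin 7) (1:ℝ) : W7) 4 = 0 := rfl
  simp only [Fin.sum_univ_seven, X7_6_0, X7_6_1, X7_6_2, X7_6_3, X7_6_4, X7_6_5, X7_6_6, X7_0_4, X7_1_4, X7_2_4, X7_3_4, X7_4_4, X7_5_4, X7_6_4, hs]
  ring

lemma Vk_6_5 (c : W7) :
    c 6 * c 5 - ∑ j : Fin 7, X7 c 6 j * X7 c j 5 = (∑ i : Fin 7, c i ^ 2) * (Pi.single 6 1 : W7) 5 := by
  have hs : (Pi.single (6:Fin 7) (1:ℝ) : W7) 5 = 0 := rfl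
  simp only [Fin.sum_univ_seven, X7_6_0, X7_6_1, X7_6_2, X7_6_3, X7_6_4, X7_6_5, X7_6_6, X7_0_5, X7_1_5, X7_2_5, X7_3_5, X7_4_5, X7_5_5, X7_6_5, hs]
  ring

lemma Vk_6_6 (c : W7) :
    c 6 * c 6 - ∑ j : Fin 7, X7 c 6 j * X7 c j 6 = (∑ i : Fin 7, c i ^ 2) * (Pi.single 6 1 : W7) 6 := by
  have hs : (Pi.single (6:Fin 7) (1:ℝ) : W7) 6 = 1 := rfl
  simp only [Fin.sum_univ_seven, X7_6_0, X7_6_1, X7_6_2, X7_6_3, X7_6_4, X7_6_5, X7_6_6, X7_0_6, X7_1_6, X7_2_6, X7_3_6, X7_4_6, X7_5_6, X7_6_6, hs]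
  ring

lemma Vk (c : W7) (k m : Fin 7) :
    c k * c m - ∑ j : Fin 7, X7 c k j * X7 c j m = (∑ i : Fin 7, c i ^ 2) * (Pi.single k 1 : W7) m := by
  fin_cases k <;> fin_cases m
  · exact Vk_0_0 c
  · exact Vk_0_1 c
  · exact Vk_0_2 c
  · exact Vk_0_3 c
  · exact Vk_0_4 c
  · exact Vk_0_5 c
  · exact Vk_0_6 c
  · exact Vk_1_0 c
  · exact Vk_1_1 c
  · exact Vk_1_2 c
  · exact Vk_1_3 c
  · exact Vk_1_4 c
  · exact Vk_1_5 c
  · exact Vk_1_6 c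
  · exact Vk_2_0 c
  · exact Vk_2_1 c
  · exact Vk_2_2 c
  · exact Vk_2_3 c
  · exact Vk_2_4 c
  · exact Vk_2_5 c
  · exact Vk_2_6 c
  · exact Vk_3_0 c
  · exact Vk_3_1 c
  · exact Vk_3_2 c
  · exact Vk_3_3 c
  · exact Vk_3_4 c
  · exact Vk_3_5 c
  · exact Vk_3_6 c
  · exact Vk_4_0 c
  · exact Vk_4_1 c
  · exact Vk_4_2 c
  · exact Vk_4_3 c
  · exact Vk_4_4 c
  · exact Vk_4_5 c
  · exact Vk_4_6 c
  · exact Vk_5_0 c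
  · exact Vk_5_1 c
  · exact Vk_5_2 c
  · exact Vk_5_3 c
  · exact Vk_5_4 c
  · exact Vk_5_5 c
  · exact Vk_5_6 c
  · exact Vk_6_0 c
  · exact Vk_6_1 c
  · exact Vk_6_2 c
  · exact Vk_6_3 c
  · exact Vk_6_4 c
  · exact Vk_6_5 c
  · exact Vk_6_6 c
def sgSpan : Submodule ℝ E7 := Submodule.span ℝ (Set.range sg)

def F0 : Fin 7 → Fin 6 → Fin 7 := ![![1,2,3,4,5,6], ![0,2,3,4,5,6], ![0,1,3,4,5,6], ![0,1,2,4,5,6], ![0,1,2,3,5,6], ![0,1,2,3,4,6], ![0,1,2,3,4,5]]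
lemma F0_range (k x : Fin 7) (h : x ≠ k) : ∃ j, F0 k j = x := by revert h; revert x k; decide
lemma e7_fold (i : Fin 7) : ExteriorAlgebra.ι ℝ (Pi.single i (1:ℝ)) = e7 i := rfl
lemma ofFn6_prod (f : Fin 6 → E7) : (List.ofFn f).prod = f 0 * (f 1 * (f 2 * (f 3 * (f 4 * f 5)))) := by
  have c0_1 : ((0:Fin 1).succ) = (1 : Fin 2) := rfl
  have c0_2 : ((0:Fin 2).succ) = (1 : Fin 3) := rfl
  have c0_3 : ((0:Fin 3).succ) = (1 : Fin 4) := rfl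
  have c0_4 : ((0:Fin 4).succ) = (1 : Fin 5) := rfl
  have c0_5 : ((0:Fin 5).succ) = (1 : Fin 6) := rfl
  have c1_2 : ((1:Fin 2).succ) = (2 : Fin 3) := rfl
  have c1_3 : ((1:Fin 3).succ) = (2 : Fin 4) := rfl
  have c1_4 : ((1:Fin 4).succ) = (2 : Fin 5) := rfl
  have c1_5 : ((1:Fin 5).succ) = (2 : Fin 6) := rfl
  have c2_3 : ((2:Fin 3).succ) = (3 : Fin 4) := rfl
  have c2_4 : ((2:Fin 4).succ) = (3 : Fin 5) := rfl
  have c2_5 : ((2:Fin 5).succ) = (3 : Fin 6) := rfl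
  have c3_4 : ((3:Fin 4).succ) = (4 : Fin 5) := rfl
  have c3_5 : ((3:Fin 5).succ) = (4 : Fin 6) := rfl
  have c4_5 : ((4:Fin 5).succ) = (5 : Fin 6) := rfl
  simp [List.ofFn_succ, c0_1, c0_2, c0_3, c0_4, c0_5, c1_2, c1_3, c1_4, c1_5, c2_3, c2_4, c2_5, c3_4, c3_5, c4_5]
lemma F0e_0_0 : F0 0 0 = 1 := rfl
lemma F0e_0_1 : F0 0 1 = 2 := rfl
lemma F0e_0_2 : F0 0 2 = 3 := rfl
lemma F0e_0_3 : F0 0 3 = 4 := rfl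
lemma F0e_0_4 : F0 0 4 = 5 := rfl
lemma F0e_0_5 : F0 0 5 = 6 := rfl
lemma F0e_1_0 : F0 1 0 = 0 := rfl
lemma F0e_1_1 : F0 1 1 = 2 := rfl
lemma F0e_1_2 : F0 1 2 = 3 := rfl
lemma F0e_1_3 : F0 1 3 = 4 := rfl
lemma F0e_1_4 : F0 1 4 = 5 := rfl
lemma F0e_1_5 : F0 1 5 = 6 := rfl
lemma F0e_2_0 : F0 2 0 = 0 := rfl
lemma F0e_2_1 : F0 2 1 = 1 := rfl
lemma F0e_2_2 : F0 2 2 = 3 := rfl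
lemma F0e_2_3 : F0 2 3 = 4 := rfl
lemma F0e_2_4 : F0 2 4 = 5 := rfl
lemma F0e_2_5 : F0 2 5 = 6 := rfl
lemma F0e_3_0 : F0 3 0 = 0 := rfl
lemma F0e_3_1 : F0 3 1 = 1 := rfl
lemma F0e_3_2 : F0 3 2 = 2 := rfl
lemma F0e_3_3 : F0 3 3 = 4 := rfl
lemma F0e_3_4 : F0 3 4 = 5 := rfl
lemma F0e_3_5 : F0 3 5 = 6 := rfl
lemma F0e_4_0 : F0 4 0 = 0 := rfl
lemma F0e_4_1 : F0 4 1 = 1 := rfl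
lemma F0e_4_2 : F0 4 2 = 2 := rfl
lemma F0e_4_3 : F0 4 3 = 3 := rfl
lemma F0e_4_4 : F0 4 4 = 5 := rfl
lemma F0e_4_5 : F0 4 5 = 6 := rfl
lemma F0e_5_0 : F0 5 0 = 0 := rfl
lemma F0e_5_1 : F0 5 1 = 1 := rfl
lemma F0e_5_2 : F0 5 2 = 2 := rfl
lemma F0e_5_3 : F0 5 3 = 3 := rfl
lemma F0e_5_4 : F0 5 4 = 4 := rfl
lemma F0e_5_5 : F0 5 5 = 6 := rfl
lemma F0e_6_0 : F0 6 0 = 0 := rfl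
lemma F0e_6_1 : F0 6 1 = 1 := rfl
lemma F0e_6_2 : F0 6 2 = 2 := rfl
lemma F0e_6_3 : F0 6 3 = 3 := rfl
lemma F0e_6_4 : F0 6 4 = 4 := rfl
lemma F0e_6_5 : F0 6 5 = 5 := rfl
lemma F0m_0 :
    ExteriorAlgebra.ιMulti ℝ 6 (fun i => (Pi.single (F0 0 i) 1 : W7)) ∈ sgSpan := by
  rw [ExteriorAlgebra.ιMulti_apply, ofFn6_prod]
  simp only [F0e_0_0, F0e_0_1, F0e_0_2, F0e_0_3, F0e_0_4, F0e_0_5, F0e_1_0, F0e_1_1, F0e_1_2, F0e_1_3, F0e_1_4, F0e_1_5, F0e_2_0, F0e_2_1, F0e_2_2, F0e_2_3, F0e_2_4, F0e_2_5, F0e_3_0, F0e_3_1, F0e_3_2, F0e_3_3, F0e_3_4, F0e_3_5, F0e_4_0, F0e_4_1, F0e_4_2, F0e_4_3, F0e_4_4, F0e_4_5, F0e_5_0, F0e_5_1, F0e_5_2, F0e_5_3, F0e_5_4, F0e_5_5, F0e_6_0, F0e_6_1, F0e_6_2, F0e_6_3, F0e_6_4, F0e_6_5, e7_fold]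
  have h : (e7 1 * (e7 2 * (e7 3 * (e7 4 * (e7 5 * (e7 6))))) : E7) = sg 0 := by rw [sg_0]; simp only [mul_assoc]
  rw [h]
  exact Submodule.subset_span ⟨0, rfl⟩
lemma F0m_1 :
    ExteriorAlgebra.ιMulti ℝ 6 (fun i => (Pi.single (F0 1 i) 1 : W7)) ∈ sgSpan := by
  rw [ExteriorAlgebra.ιMulti_apply, ofFn6_prod]
  simp only [F0e_0_0, F0e_0_1, F0e_0_2, F0e_0_3, F0e_0_4, F0e_0_5, F0e_1_0, F0e_1_1, F0e_1_2, F0e_1_3, F0e_1_4, F0e_1_5, F0e_2_0, F0e_2_1, F0e_2_2, F0e_2_3, F0e_2_4, F0e_2_5, F0e_3_0, F0e_3_1, F0e_3_2, F0e_3_3, F0e_3_4, F0e_3_5, F0e_4_0, F0e_4_1, F0e_4_2, F0e_4_3, F0e_4_4, F0e_4_5, F0e_5_0, F0e_5_1, F0e_5_2, F0e_5_3, F0e_5_4, F0e_5_5, F0e_6_0, F0e_6_1, F0e_6_2, F0e_6_3, F0e_6_4, F0e_6_5, e7_fold]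
  have h : (e7 0 * (e7 2 * (e7 3 * (e7 4 * (e7 5 * (e7 6))))) : E7) = -sg 1 := by rw [sg_1, neg_neg]; simp only [mul_assoc]
  rw [h]
  exact neg_mem (Submodule.subset_span ⟨1, rfl⟩)
lemma F0m_2 :
    ExteriorAlgebra.ιMulti ℝ 6 (fun i => (Pi.single (F0 2 i) 1 : W7)) ∈ sgSpan := by
  rw [ExteriorAlgebra.ιMulti_apply, ofFn6_prod]
  simp only [F0e_0_0, F0e_0_1, F0e_0_2, F0e_0_3, F0e_0_4, F0e_0_5, F0e_1_0, F0e_1_1, F0e_1_2, F0e_1_3, F0e_1_4, F0e_1_5, F0e_2_0, F0e_2_1, F0e_2_2, F0e_2_3, F0e_2_4, F0e_2_5, F0e_3_0, F0e_3_1, F0e_3_2, F0e_3_3, F0e_3_4, F0e_3_5, F0e_4_0, F0e_4_1, F0e_4_2, F0e_4_3, F0e_4_4, F0e_4_5, F0e_5_0, F0e_5_1, F0e_5_2, F0e_5_3, F0e_5_4, F0e_5_5, F0e_6_0, F0e_6_1, F0e_6_2, F0e_6_3, F0e_6_4, F0e_6_5, e7_fold]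
  have h : (e7 0 * (e7 1 * (e7 3 * (e7 4 * (e7 5 * (e7 6))))) : E7) = sg 2 := by rw [sg_2]; simp only [mul_assoc]
  rw [h]
  exact Submodule.subset_span ⟨2, rfl⟩
lemma F0m_3 :
    ExteriorAlgebra.ιMulti ℝ 6 (fun i => (Pi.single (F0 3 i) 1 : W7)) ∈ sgSpan := by
  rw [ExteriorAlgebra.ιMulti_apply, ofFn6_prod]
  simp only [F0e_0_0, F0e_0_1, F0e_0_2, F0e_0_3, F0e_0_4, F0e_0_5, F0e_1_0, F0e_1_1, F0e_1_2, F0e_1_3, F0e_1_4, F0e_1_5, F0e_2_0, F0e_2_1, F0e_2_2, F0e_2_3, F0e_2_4, F0e_2_5, F0e_3_0, F0e_3_1, F0e_3_2, F0e_3_3, F0e_3_4, F0e_3_5, F0e_4_0, F0e_4_1, F0e_4_2, F0e_4_3, F0e_4_4, F0e_4_5, F0e_5_0, F0e_5_1, F0e_5_2, F0e_5_3, F0e_5_4, F0e_5_5, F0e_6_0, F0e_6_1, F0e_6_2, F0e_6_3, F0e_6_4, F0e_6_5, e7_fold]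
  have h : (e7 0 * (e7 1 * (e7 2 * (e7 4 * (e7 5 * (e7 6))))) : E7) = -sg 3 := by rw [sg_3, neg_neg]; simp only [mul_assoc]
  rw [h]
  exact neg_mem (Submodule.subset_span ⟨3, rfl⟩)
lemma F0m_4 :
    ExteriorAlgebra.ιMulti ℝ 6 (fun i => (Pi.single (F0 4 i) 1 : W7)) ∈ sgSpan := by
  rw [ExteriorAlgebra.ιMulti_apply, ofFn6_prod]
  simp only [F0e_0_0, F0e_0_1, F0e_0_2, F0e_0_3, F0e_0_4, F0e_0_5, F0e_1_0, F0e_1_1, F0e_1_2, F0e_1_3, F0e_1_4, F0e_1_5, F0e_2_0, F0e_2_1, F0e_2_2, F0e_2_3, F0e_2_4, F0e_2_5, F0e_3_0, F0e_3_1, F0e_3_2, F0e_3_3, F0e_3_4, F0e_3_5, F0e_4_0, F0e_4_1, F0e_4_2, F0e_4_3, F0e_4_4, F0e_4_5, F0e_5_0, F0e_5_1, F0e_5_2, F0e_5_3, F0e_5_4, F0e_5_5, F0e_6_0, F0e_6_1, F0e_6_2, F0e_6_3, F0e_6_4, F0e_6_5, e7_fold]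
  have h : (e7 0 * (e7 1 * (e7 2 * (e7 3 * (e7 5 * (e7 6))))) : E7) = sg 4 := by rw [sg_4]; simp only [mul_assoc]
  rw [h]
  exact Submodule.subset_span ⟨4, rfl⟩
lemma F0m_5 :
    ExteriorAlgebra.ιMulti ℝ 6 (fun i => (Pi.single (F0 5 i) 1 : W7)) ∈ sgSpan := by
  rw [ExteriorAlgebra.ιMulti_apply, ofFn6_prod]
  simp only [F0e_0_0, F0e_0_1, F0e_0_2, F0e_0_3, F0e_0_4, F0e_0_5, F0e_1_0, F0e_1_1, F0e_1_2, F0e_1_3, F0e_1_4, F0e_1_5, F0e_2_0, F0e_2_1, F0e_2_2, F0e_2_3, F0e_2_4, F0e_2_5, F0e_3_0, F0e_3_1, F0e_3_2, F0e_3_3, F0e_3_4, F0e_3_5, F0e_4_0, F0e_4_1, F0e_4_2, F0e_4_3, F0e_4_4, F0e_4_5, F0e_5_0, F0e_5_1, F0e_5_2, F0e_5_3, F0e_5_4, F0e_5_5, F0e_6_0, F0e_6_1, F0e_6_2, F0e_6_3, F0e_6_4, F0e_6_5, e7_fold]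
  have h : (e7 0 * (e7 1 * (e7 2 * (e7 3 * (e7 4 * (e7 6))))) : E7) = -sg 5 := by rw [sg_5, neg_neg]; simp only [mul_assoc]
  rw [h]
  exact neg_mem (Submodule.subset_span ⟨5, rfl⟩)
lemma F0m_6 :
    ExteriorAlgebra.ιMulti ℝ 6 (fun i => (Pi.single (F0 6 i) 1 : W7)) ∈ sgSpan := by
  rw [ExteriorAlgebra.ιMulti_apply, ofFn6_prod]
  simp only [F0e_0_0, F0e_0_1, F0e_0_2, F0e_0_3, F0e_0_4, F0e_0_5, F0e_1_0, F0e_1_1, F0e_1_2, F0e_1_3, F0e_1_4, F0e_1_5, F0e_2_0, F0e_2_1, F0e_2_2, F0e_2_3, F0e_2_4, F0e_2_5, F0e_3_0, F0e_3_1, F0e_3_2, F0e_3_3, F0e_3_4, F0e_3_5, F0e_4_0, F0e_4_1, F0e_4_2, F0e_4_3, F0e_4_4, F0e_4_5, F0e_5_0, F0e_5_1, F0e_5_2, F0e_5_3, F0e_5_4, F0e_5_5, F0e_6_0, F0e_6_1, F0e_6_2, F0e_6_3, F0e_6_4, F0e_6_5, e7_fold]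
  have h : (e7 0 * (e7 1 * (e7 2 * (e7 3 * (e7 4 * (e7 5))))) : E7) = sg 6 := by rw [sg_6]; simp only [mul_assoc]
  rw [h]
  exact Submodule.subset_span ⟨6, rfl⟩
lemma F0_mono_mem (k : Fin 7) :
    ExteriorAlgebra.ιMulti ℝ 6 (fun i => (Pi.single (F0 k i) 1 : W7)) ∈ sgSpan := by
  fin_cases k
  · exact F0m_0
  · exact F0m_1
  · exact F0m_2
  · exact F0m_3
  · exact F0m_4
  · exact F0m_5
  · exact F0m_6
lemma factor_perm {f g : Fin 6 → Fin 7} (hf : Function.Injective f)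
    (hr : ∀ i, ∃ j, g j = f i) : ∃ σ : Equiv.Perm (Fin 6), f = g ∘ σ := by
  choose h hh using hr
  have hinj : Function.Injective h := fun a b hab => hf (by rw [← hh a, ← hh b, hab])
  exact ⟨Equiv.ofBijective h (Finite.injective_iff_bijective.mp hinj),
    funext fun i => (hh i).symm⟩

lemma mono6_mem_span (f : Fin 6 → Fin 7) :
    ExteriorAlgebra.ιMulti ℝ 6 (fun i => (Pi.single (f i) 1 : W7)) ∈ sgSpan := by
  by_cases hf : Function.Injective f
  · have hcard : (Finset.univ.image f).card = 6 := by
      rw [Finset.card_image_of_injective _ hf, Finset.card_univ, Fintype.card_fin]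
    have hc1 : ((Finset.univ.image f)ᶜ).card = 1 := by
      rw [Finset.card_compl, hcard]; rfl
    obtain ⟨k, hk⟩ := Finset.card_eq_one.mp hc1
    have hknot : ∀ i, f i ≠ k := by
      intro i hik
      have h1 : k ∈ (Finset.univ.image f)ᶜ := hk ▸ Finset.mem_singleton_self k
      have h2 : k ∈ Finset.univ.image f := Finset.mem_image.2 ⟨i, Finset.mem_univ i, hik⟩
      exact (Finset.mem_compl.mp h1) h2
    obtain ⟨σ, hσ⟩ := factor_perm hf (fun i => F0_range k (f i) (hknot i))
    have key : (fun i => (Pi.single (f i) 1 : W7))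
        = (fun i => (Pi.single (F0 k i) 1 : W7)) ∘ σ := by
      funext i
      have : f i = F0 k (σ i) := congrFun hσ i
      simp [this, Function.comp]
    have hre : (ExteriorAlgebra.ιMulti ℝ 6) (fun i => (Pi.single (f i) 1 : W7))
        = Equiv.Perm.sign σ • (ExteriorAlgebra.ιMulti ℝ 6) (fun i => (Pi.single (F0 k i) 1 : W7)) := by
      rw [key]
      exact AlternatingMap.map_perm _ _ _
    rw [hre]
    rcases Int.units_eq_one_or (Equiv.Perm.sign σ) with h | h <;> rw [h]
    · simpa using F0_mono_mem k
    · have hneg : ((-1 : ℤˣ) • (ExteriorAlgebra.ιMulti ℝ 6 (fun i => (Pi.single (F0 k i) 1 : W7)) : E7))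
          = -(ExteriorAlgebra.ιMulti ℝ 6 (fun i => (Pi.single (F0 k i) 1 : W7))) := by
        simp [Units.smul_def]
      rw [hneg]
      exact neg_mem (F0_mono_mem k)
  · have hf2 : ¬Function.Injective (fun i => (Pi.single (f i) 1 : W7)) := by
      intro hinj
      apply hf
      intro a b hab
      exact hinj (show (Pi.single (f a) 1 : W7) = Pi.single (f b) 1 by rw [hab])
    rw [(ExteriorAlgebra.ιMulti ℝ 6 (M := W7)).map_eq_zero_of_not_injective _ hf2]
    exact zero_mem _

lemma pi_single_sum (w : W7) : w = ∑ j : Fin 7, w j • (Pi.single j 1 : W7) := by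
  funext m
  simp [Finset.sum_apply, Pi.single_apply]

lemma gr6_le : gr7 6 ≤ sgSpan := by
  rw [gr7, ← ExteriorAlgebra.ιMulti_span_fixedDegree, Submodule.span_le]
  rintro x ⟨v, rfl⟩
  have hv : v = fun i => ∑ j : Fin 7, v i j • (Pi.single j 1 : W7) :=
    funext fun i => pi_single_sum (v i)
  have expand : (ExteriorAlgebra.ιMulti ℝ 6 v : E7)
      = ∑ r : Fin 6 → Fin 7, (∏ i, v i (r i)) •
          ExteriorAlgebra.ιMulti ℝ 6 (fun i => (Pi.single (r i) 1 : W7)) := by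
    conv_lhs => rw [hv]
    rw [show (ExteriorAlgebra.ιMulti ℝ 6 (fun i => ∑ j : Fin 7, v i j • (Pi.single j 1 : W7)) : E7)
        = (ExteriorAlgebra.ιMulti ℝ 6 (M := W7)).toMultilinearMap
            (fun i => ∑ j : Fin 7, v i j • (Pi.single j 1 : W7)) from rfl]
    rw [MultilinearMap.map_sum]
    refine Finset.sum_congr rfl fun r _ => ?_
    exact MultilinearMap.map_smul_univ _ (fun i => v i (r i)) (fun i => (Pi.single (r i) 1 : W7))
  rw [expand]
  exact Submodule.sum_mem _ fun r _ => Submodule.smul_mem _ _ (mono6_mem_span r)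


/-- for every nonzero covector `ξ`, the map
`Λ³ → Λ⁶, α ↦ (ι_{ξ♯} ∗φ) ∧ α` is surjective. -/
theorem stmt14 (ξ : Module.Dual ℝ W7) (hξ : ξ ≠ 0) :
    ∀ β ∈ gr7 6, ∃ α ∈ gr7 3, CliffordAlgebra.contractLeft ξ psi7 * α = β := by
  intro β hβ
  have hc : ∃ i, ξ (Pi.single i 1) ≠ 0 := by
    by_contra h
    push_neg at h
    apply hξ
    apply LinearMap.ext
    intro w
    conv_lhs => rw [pi_single_sum w]
    simp [h]
  have hn : (∑ i : Fin 7, ξ (Pi.single i 1) ^ 2) ≠ 0 := by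
    obtain ⟨i, hi⟩ := hc
    have : (0:ℝ) < ∑ i : Fin 7, ξ (Pi.single i 1) ^ 2 :=
      Finset.sum_pos' (fun j _ => sq_nonneg _) ⟨i, Finset.mem_univ i, by positivity⟩
    exact ne_of_gt this
  set Im : Submodule ℝ E7 :=
    Submodule.map (LinearMap.mulLeft ℝ (CliffordAlgebra.contractLeft ξ psi7)) (gr7 3) with hIm
  have h1 : sigL (fun i => ξ (Pi.single i 1)) ∈ Im := by
    have hm : CliffordAlgebra.contractLeft ξ psi7 * phi7 ∈ Im :=
      ⟨phi7, phi7_mem, by simp [LinearMap.mulLeft_apply]⟩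
    have h4 := Im.smul_mem (4⁻¹ : ℝ) hm
    rw [L1 ξ, smul_smul] at h4
    norm_num at h4
    exact h4
  have h2 : ∀ j, sigL (X7 (fun i => ξ (Pi.single i 1)) j) ∈ Im := by
    intro j
    have hm : CliffordAlgebra.contractLeft ξ psi7 * P7 j ∈ Im :=
      ⟨P7 j, P7_mem j, by simp [LinearMap.mulLeft_apply]⟩
    have h4 := Im.smul_mem (2⁻¹ : ℝ) hm
    rw [L2 ξ j, smul_smul] at h4
    norm_num at h4
    exact h4
  have hsg : ∀ k, sg k ∈ Im := by
    intro k
    have hvec : ((∑ i : Fin 7, ξ (Pi.single i 1) ^ 2) • (Pi.single k 1 : W7))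
        = (ξ (Pi.single k 1)) • (fun i => ξ (Pi.single i 1))
          - ∑ j : Fin 7, (X7 (fun i => ξ (Pi.single i 1)) k j) •
              X7 (fun i => ξ (Pi.single i 1)) j := by
      funext m
      have hVk := Vk (fun i => ξ (Pi.single i 1)) k m
      simp only [Pi.smul_apply, Pi.sub_apply, Finset.sum_apply, smul_eq_mul]
      linarith [hVk]
    have hImMem : sigL ((∑ i : Fin 7, ξ (Pi.single i 1) ^ 2) • (Pi.single k 1 : W7)) ∈ Im := by
      rw [hvec, map_sub, map_smul, map_sum]
      refine sub_mem (Im.smul_mem _ h1) (Submodule.sum_mem _ fun j _ => ?_)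
      rw [map_smul]
      exact Im.smul_mem _ (h2 j)
    rw [map_smul, sigL_single] at hImMem
    have hfin := Im.smul_mem (∑ i : Fin 7, ξ (Pi.single i 1) ^ 2)⁻¹ hImMem
    rwa [smul_smul, inv_mul_cancel₀ hn, one_smul] at hfin
  have hle : sgSpan ≤ Im := by
    rw [sgSpan, Submodule.span_le]
    rintro x ⟨k, rfl⟩
    exact hsg k
  obtain ⟨α, hα, hval⟩ := hle (gr6_le hβ)
  exact ⟨α, hα, by simpa [LinearMap.mulLeft_apply] using hval⟩
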